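/- arXiv:1504.04198 — 13 statements merged into one kernel-verified Lean document; each statement's English description precedes it below -/
import Mathlib

section
/- Let X be a topological space and let {Aᵢ : i ∈ I} be a family of clopen subsets of X that is discrete (every point of X has a neighborhood meeting at most one Aᵢ, in fact locally finite suffices since they are clopen and pairwise disjoint). Then the map T : (I → Bool) → C(X, Bool) sending z to the function x ↦ zᵢ if x ∈ Aᵢ (and false if x lies in no Aᵢ) is a well-defined injective map, and T is an embedding of the product space Bool^I into C(X, Bool) equipped with the compact-open topology. -/
open Topology Set

/-- If `{A i : i ∈ I}` is a discrete family of (nonempty) clopen subsets of a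
topological space `X` (every point has a neighborhood meeting at most one `A i`), then the map
`T : (I → Bool) → C(X, Bool)` sending `z` to the function equal to `z i` on `A i` and `false`
outside all the `A i` is well defined, injective, and an embedding of the product space
`Bool ^ I` into `C(X, Bool)` with the compact-open topology. -/
theorem statement0 {X : Type*} {I : Type*} [TopologicalSpace X]
    (A : I → Set X) (hclopen : ∀ i, IsClopen (A i)) (hne : ∀ i, (A i).Nonempty)
    (hdisc : ∀ x : X, ∃ U ∈ 𝓝 x, {i : I | (U ∩ A i).Nonempty}.Subsingleton) :
    ∃ T : (I → Bool) → C(X, Bool),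
      (∀ z i x, x ∈ A i → T z x = z i) ∧
      (∀ z x, (∀ i, x ∉ A i) → T z x = false) ∧
      Function.Injective T ∧
      Topology.IsEmbedding T := by
  classical
  -- pairwise disjointness
  have hdisj : ∀ i j x, x ∈ A i → x ∈ A j → i = j := by
    intro i j x hi hj
    obtain ⟨U, hU, hsub⟩ := hdisc x
    have hxU : x ∈ U := mem_of_mem_nhds hU
    exact hsub ⟨x, hxU, hi⟩ ⟨x, hxU, hj⟩
  -- the underlying function
  set f : (I → Bool) → X → Bool :=
    fun z x => if h : ∃ i, x ∈ A i then z h.choose else false with hf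
  have hval : ∀ z i x, x ∈ A i → f z x = z i := by
    intro z i x hx
    have h : ∃ i, x ∈ A i := ⟨i, hx⟩
    have : h.choose = i := hdisj _ _ x h.choose_spec hx
    simp [hf, dif_pos h, this]
  have hfalse : ∀ z x, (∀ i, x ∉ A i) → f z x = false := by
    intro z x hx
    have h : ¬ ∃ i, x ∈ A i := by rintro ⟨i, hi⟩; exact hx i hi
    simp [hf, dif_neg h]
  -- continuity of each f z
  have hcont : ∀ z, Continuous (f z) := by
    intro z
    apply IsLocallyConstant.continuous
    rw [IsLocallyConstant.iff_exists_open]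
    intro x
    obtain ⟨U, hU, hsub⟩ := hdisc x
    obtain ⟨V, hVU, hVopen, hxV⟩ := mem_nhds_iff.mp hU
    by_cases hx : ∃ i, x ∈ A i
    · obtain ⟨i, hi⟩ := hx
      refine ⟨V ∩ A i, hVopen.inter (hclopen i).2, ⟨hxV, hi⟩, ?_⟩
      intro y hy
      rw [hval z i y hy.2, hval z i x hi]
    · push_neg at hx
      by_cases h0 : ∃ i₀, (U ∩ A i₀).Nonempty
      · obtain ⟨i₀, hi₀⟩ := h0
        refine ⟨V ∩ (A i₀)ᶜ, hVopen.inter (hclopen i₀).1.isOpen_compl,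
          ⟨hxV, hx i₀⟩, ?_⟩
        intro y hy
        rw [hfalse z x hx]
        apply hfalse
        intro j hj
        have : j ∈ {i : I | (U ∩ A i).Nonempty} := ⟨y, hVU hy.1, hj⟩
        have hji : j = i₀ := hsub this hi₀
        exact hy.2 (hji ▸ hj)
      · push_neg at h0
        refine ⟨V, hVopen, hxV, ?_⟩
        intro y hy
        rw [hfalse z x hx]
        apply hfalse
        intro j hj
        exact absurd (h0 j) (Set.nonempty_iff_ne_empty.mp ⟨y, hVU hy, hj⟩)
  set T : (I → Bool) → C(X, Bool) := fun z => ⟨f z, hcont z⟩ with hT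
  have hTval : ∀ z i x, x ∈ A i → T z x = z i := fun z i x hx => hval z i x hx
  have hTfalse : ∀ z x, (∀ i, x ∉ A i) → T z x = false := fun z x hx => hfalse z x hx
  -- continuous left inverse
  set S : C(X, Bool) → (I → Bool) := fun g i => g (hne i).choose with hS
  have hScont : Continuous S :=
    continuous_pi fun i => continuous_eval_const _
  have hST : Function.LeftInverse S T := by
    intro z
    funext i
    exact hval z i _ (hne i).choose_spec
  -- continuity of T
  have hTcont : Continuous T := by
    rw [ContinuousMap.continuous_compactOpen]
    intro K hK U hU
    -- the finitely many indices meeting K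
    have hJfin : {i : I | (K ∩ A i).Nonempty}.Finite := by
      choose V hV hVsub using hdisc
      obtain ⟨t, ht⟩ := hK.elim_nhds_subcover V (fun x _ => hV x)
      have hsub : {i : I | (K ∩ A i).Nonempty} ⊆
          ⋃ x ∈ t, {i : I | (V x ∩ A i).Nonempty} := by
        rintro i ⟨y, hyK, hyA⟩
        have := ht.2 hyK
        simp only [mem_iUnion] at this ⊢
        obtain ⟨x, hx, hyV⟩ := this
        exact ⟨x, hx, y, hyV, hyA⟩
      exact Finite.subset (t.finite_toSet.biUnion fun x _ => (hVsub x).finite) hsub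
    by_cases hP : (false ∈ U ∨ ∀ x ∈ K, ∃ i, x ∈ A i)
    · have heq : {z : I → Bool | MapsTo (T z) K U} =
          ⋂ i ∈ {i : I | (K ∩ A i).Nonempty}, {z : I → Bool | z i ∈ U} := by
        ext z
        simp only [mem_setOf_eq, mem_iInter]
        constructor
        · rintro hz i ⟨y, hyK, hyA⟩
          have := hz hyK
          rwa [hTval z i y hyA] at this
        · intro hz x hxK
          by_cases hx : ∃ i, x ∈ A i
          · obtain ⟨i, hi⟩ := hx
            rw [hTval z i x hi]
            exact hz i ⟨x, hxK, hi⟩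
          · push_neg at hx
            rw [hTfalse z x hx]
            rcases hP with h | h
            · exact h
            · exact absurd (h x hxK) (by push_neg; exact hx)
      rw [heq]
      exact hJfin.isOpen_biInter fun i _ =>
        show IsOpen ((fun z : I → Bool => z i) ⁻¹' U) from
          hU.preimage (continuous_apply i)
    · push_neg at hP
      obtain ⟨hfU, x, hxK, hx⟩ := hP
      have heq : {z : I → Bool | MapsTo (T z) K U} = ∅ := by
        ext z
        simp only [mem_setOf_eq, mem_empty_iff_false, iff_false]
        intro hz
        have := hz hxK
        rw [hTfalse z x hx] at this
        exact hfU this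
      rw [heq]
      exact isOpen_empty
  refine ⟨T, hTval, hTfalse, hST.injective, ?_⟩
  have hind : Topology.IsInducing T :=
    Topology.IsInducing.of_comp hTcont hScont
      (by rw [show S ∘ T = id from funext hST]; exact Topology.IsInducing.id)
  exact ⟨hind, hST.injective⟩
end

section
/- If X is a metric space whose derived set X' (the set of non-isolated points of X) is compact, and X is separable, then X is completely metrizable (i.e., X is a Polish space). -/
open Topology Filter Metric Set

/-- In a metric space, a point is isolated iff some ball around it contains only itself. -/
private lemma isolated_iff_ball {α : Type*} [MetricSpace α] (x : α) :
    𝓝[≠] x = ⊥ ↔ ∃ ε > 0, ∀ y, dist y x < ε → y = x := by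
  constructor
  · intro hx
    have h0 : (∅ : Set α) ∈ 𝓝[≠] x := by rw [hx]; exact Filter.mem_bot
    rcases mem_nhdsWithin.1 h0 with ⟨U, hUo, hxU, hU⟩
    rcases Metric.isOpen_iff.1 hUo x hxU with ⟨ε, hε, hball⟩
    refine ⟨ε, hε, fun y hy => ?_⟩
    by_contra hne
    exact hU ⟨hball (Metric.mem_ball.2 hy), hne⟩
  · rintro ⟨ε, hε, hb⟩
    rw [← Filter.empty_mem_iff_bot, mem_nhdsWithin]
    exact ⟨Metric.ball x ε, Metric.isOpen_ball, Metric.mem_ball_self hε,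
      fun y hy => absurd (hb y (Metric.mem_ball.1 hy.1)) hy.2⟩

/-- The set of isolated points of a metric space is open. -/
private lemma isOpen_isolated {α : Type*} [MetricSpace α] :
    IsOpen {y : α | 𝓝[≠] y = ⊥} := by
  refine Metric.isOpen_iff.2 fun y hy => ?_
  rcases (isolated_iff_ball y).1 hy with ⟨ε, hε, hb⟩
  exact ⟨ε, hε, fun z hz => by rw [Set.mem_setOf_eq, hb z (Metric.mem_ball.1 hz)]; exact hy⟩

/-- A separable metric space whose derived set (the set of non-isolated points)
is compact is completely metrizable, i.e. a Polish space. -/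
theorem statement1 {X : Type*} [MetricSpace X] [TopologicalSpace.SeparableSpace X]
    (h : IsCompact {x : X | (𝓝[≠] x).NeBot}) :
    PolishSpace X := by
  set K : Set X := {x : X | (𝓝[≠] x).NeBot} with hKdef
  set Y := UniformSpace.Completion X with hYdef
  set e : X → Y := ((↑) : X → UniformSpace.Completion X) with hedef
  have he : Isometry e := UniformSpace.Completion.coe_isometry
  have hdense : DenseRange e := UniformSpace.Completion.denseRange_coe
  haveI : TopologicalSpace.SeparableSpace Y := hdense.separableSpace he.continuous
  haveI : SecondCountableTopology Y := UniformSpace.secondCountable_of_separable Y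
  haveI : PolishSpace Y := inferInstance
  set I : Set Y := {y : Y | 𝓝[≠] y = ⊥} with hIdef
  set Fs : Set Y := e '' K with hFdef
  have hFc : IsCompact Fs := h.image he.continuous
  set O : ℕ → Set Y := fun n => I ∪ Metric.thickening (1 / (n + 1)) Fs with hOdef
  have hOopen : ∀ n, IsOpen (O n) := fun n =>
    isOpen_isolated.union Metric.isOpen_thickening
  -- isolated points of X map to isolated points of Y
  have hiso_e : ∀ x : X, 𝓝[≠] x = ⊥ → e x ∈ I := by
    intro x hx
    rcases (isolated_iff_ball x).1 hx with ⟨ε, hε, hb⟩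
    refine (isolated_iff_ball (e x)).2 ⟨ε / 2, by positivity, fun y hy => ?_⟩
    have hkey : ∀ δ > 0, dist y (e x) < δ := by
      intro δ hδ
      have hpos : 0 < min δ (ε / 2 - dist y (e x)) := lt_min hδ (by linarith)
      rcases Metric.mem_closure_iff.1 (hdense y) _ hpos with ⟨z, ⟨x', rfl⟩, hz⟩
      have hz2 : dist (e x') y < ε / 2 - dist y (e x) := by
        rw [dist_comm]
        exact lt_of_lt_of_le hz (min_le_right _ _)
      have htri : dist (e x') (e x) ≤ dist (e x') y + dist y (e x) := dist_triangle _ _ _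
      have hxx : x' = x := by
        apply hb
        rw [← he.dist_eq]
        linarith
      rw [hxx] at hz
      exact lt_of_lt_of_le hz (min_le_left _ _)
    have h0 : dist y (e x) = 0 := by
      by_contra h0
      exact lt_irrefl _ (hkey _ (lt_of_le_of_ne dist_nonneg (Ne.symm h0)))
    exact eq_of_dist_eq_zero h0
  -- every isolated point of Y is in the range of e (by density)
  have hIiso : I ⊆ Set.range e := by
    intro y hy
    rcases (isolated_iff_ball y).1 hy with ⟨ε, hε, hb⟩
    rcases Metric.mem_closure_iff.1 (hdense y) _ hε with ⟨z, ⟨x, rfl⟩, hz⟩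
    exact ⟨x, hb _ (by rw [dist_comm]; exact hz)⟩
  -- the range of e is exactly the intersection of the open sets O n
  have hrange : Set.range e = ⋂ n, O n := by
    ext y
    constructor
    · rintro ⟨x, rfl⟩
      refine Set.mem_iInter.2 fun n => ?_
      by_cases hx : x ∈ K
      · exact Or.inr (Metric.self_subset_thickening (by positivity) _ ⟨x, hx, rfl⟩)
      · exact Or.inl (hiso_e x (Filter.not_neBot.1 hx))
    · intro hy
      by_cases hyI : y ∈ I
      · exact hIiso hyI
      · have hthick : ∀ n : ℕ, y ∈ Metric.thickening (1 / (n + 1)) Fs := fun n =>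
          (Set.mem_iInter.1 hy n).resolve_left hyI
        have hycl : y ∈ closure Fs := by
          refine Metric.mem_closure_iff.2 fun δ hδ => ?_
          rcases exists_nat_one_div_lt hδ with ⟨n, hn⟩
          rcases Metric.mem_thickening_iff.1 (hthick n) with ⟨z, hzF, hz⟩
          exact ⟨z, hzF, lt_trans hz hn⟩
        rw [hFc.isClosed.closure_eq] at hycl
        rcases hycl with ⟨x, _, rfl⟩
        exact ⟨x, rfl⟩
  have hmemO : ∀ (x : X) (n : ℕ), e x ∈ O n := by
    intro x n
    have : e x ∈ ⋂ n, O n := hrange ▸ Set.mem_range_self x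
    exact Set.mem_iInter.1 this n
  -- the auxiliary function and the closed embedding
  set φ : Y → ℕ → ℝ := fun y n => (Metric.infDist y (O n)ᶜ)⁻¹ with hφdef
  set G : X → Y × (ℕ → ℝ) := fun x => (e x, φ (e x)) with hGdef
  have hφcont : ∀ (n : ℕ) (y : Y), y ∈ O n →
      ContinuousAt (fun z : Y => (Metric.infDist z (O n)ᶜ)⁻¹) y := by
    intro n y hy
    apply continuousAt_inv_infDist_pt
    rw [(hOopen n).isClosed_compl.closure_eq]
    simpa using hy
  have hGcont : Continuous G := by
    refine Continuous.prodMk he.continuous (continuous_pi fun n => ?_)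
    refine continuous_iff_continuousAt.2 fun x => ?_
    exact ((hφcont n (e x) (hmemO x n))).comp he.continuous.continuousAt
  have hGemb : IsEmbedding G :=
    IsEmbedding.of_comp hGcont continuous_fst he.isEmbedding
  -- closedness of the range of G
  have hclosed : IsClosed (Set.range G) := by
    refine IsSeqClosed.isClosed ?_
    intro u p hu hup
    choose x hx using hu
    have h1 : Filter.Tendsto (fun k => e (x k)) atTop (𝓝 p.1) := by
      have := (continuous_fst.tendsto p).comp hup
      rwa [show (Prod.fst ∘ u) = fun k => e (x k) from funext fun k => by
        show (u k).1 = e (x k); rw [← hx k]] at this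
    have h2 : ∀ n, Filter.Tendsto (fun k => φ (e (x k)) n) atTop (𝓝 (p.2 n)) := by
      intro n
      have := ((continuous_apply n).tendsto p.2).comp ((continuous_snd.tendsto p).comp hup)
      rwa [show ((fun v : ℕ → ℝ => v n) ∘ (Prod.snd ∘ u)) = fun k => φ (e (x k)) n from
        funext fun k => by show (u k).2 n = φ (e (x k)) n; rw [← hx k]] at this
    have hp1 : p.1 ∈ Set.range e := by
      rw [hrange, Set.mem_iInter]
      by_contra hcon
      push_neg at hcon
      obtain ⟨n, hn⟩ := hcon
      have hpos : ∀ k, 0 < Metric.infDist (e (x k)) (O n)ᶜ := by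
        intro k
        refine ((hOopen n).isClosed_compl.notMem_iff_infDist_pos ⟨p.1, hn⟩).1 ?_
        simpa using hmemO (x k) n
      have hle : ∀ k, Metric.infDist (e (x k)) (O n)ᶜ ≤ dist (e (x k)) p.1 := fun k =>
        Metric.infDist_le_dist_of_mem hn
      have h3 : Filter.Tendsto (fun k => dist (e (x k)) p.1) atTop (𝓝 0) :=
        tendsto_iff_dist_tendsto_zero.1 h1
      have h4 : Filter.Tendsto (fun k => (dist (e (x k)) p.1)⁻¹) atTop atTop := by
        apply tendsto_inv_nhdsGT_zero.comp
        rw [tendsto_nhdsWithin_iff]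
        exact ⟨h3, Filter.Eventually.of_forall fun k => lt_of_lt_of_le (hpos k) (hle k)⟩
      have h5 : Filter.Tendsto (fun k => φ (e (x k)) n) atTop atTop := by
        refine Filter.tendsto_atTop_mono (fun k => ?_) h4
        exact inv_anti₀ (hpos k) (hle k)
      exact (not_tendsto_atTop_of_tendsto_nhds (h2 n)) h5
    obtain ⟨x0, hx0⟩ := hp1
    have hp2 : p.2 = φ p.1 := by
      funext n
      have hcont : ContinuousAt (fun z : Y => (Metric.infDist z (O n)ᶜ)⁻¹) p.1 := by
        refine hφcont n p.1 ?_
        rw [← hx0]; exact hmemO x0 n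
      exact tendsto_nhds_unique (h2 n) (hcont.tendsto.comp h1)
    refine ⟨x0, Prod.ext ?_ ?_⟩
    · exact hx0
    · show φ (e x0) = p.2
      rw [hx0, hp2]
  have hCE : Topology.IsClosedEmbedding G := ⟨hGemb, hclosed⟩
  exact hCE.polishSpace
end

section
/- Let κ : ℕ → Cardinal be a sequence of nonzero cardinals and M_κ the metric fan as above. Let C⁰(M_κ, 2) = {f ∈ C(M_κ, 2) : f(∞) = 0} with the compact-open topology, where 2 = ℤ/2 is discrete. Then the map F : C⁰(M_κ, 2) → ⊕ₙ 2^{κₙ} defined by F(f) = (f|_{κₙ×{n}})ₙ is a topological group isomorphism onto the direct sum ⊕ₙ 2^{κₙ} endowed with the box topology (neighborhoods of 0 are products ∏ₙ Uₙ with Uₙ a neighborhood of 0 in 2^{κₙ}). -/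
open Topology Set

/-- The underlying set of the metric fan `M_κ`. -/
def FanPt (κ : ℕ → Cardinal) : Type _ := Option (Σ n : ℕ, (κ n).out)

/-- The fan topology on `M_κ`. -/
instance fanTopology (κ : ℕ → Cardinal) : TopologicalSpace (FanPt κ) where
  IsOpen S := (none ∈ S) → ∃ N : ℕ, ∀ m : ℕ, N ≤ m → ∀ a : (κ m).out,
    (Option.some ⟨m, a⟩ : FanPt κ) ∈ S
  isOpen_univ := fun _ => ⟨0, fun _ _ _ => trivial⟩
  isOpen_inter := by
    intro s t hs ht hmem
    obtain ⟨Ns, hNs⟩ := hs hmem.1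
    obtain ⟨Nt, hNt⟩ := ht hmem.2
    exact ⟨max Ns Nt, fun m hm a =>
      ⟨hNs m (le_trans (le_max_left _ _) hm) a, hNt m (le_trans (le_max_right _ _) hm) a⟩⟩
  isOpen_sUnion := by
    intro S hS hmem
    obtain ⟨t, htS, hnt⟩ := hmem
    obtain ⟨N, hN⟩ := hS t htS hnt
    exact ⟨N, fun m hm a => ⟨t, htS, hN m hm a⟩⟩

/-- The subgroup `C⁰(M_κ, 2) = {f ∈ C(M_κ, 2) : f(∞) = 0}` of the topological group
`C(M_κ, ℤ/2)` with the compact-open topology. -/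
noncomputable def Czero (κ : ℕ → Cardinal) : AddSubgroup C(FanPt κ, ZMod 2) where
  carrier := {f | f none = 0}
  zero_mem' := rfl
  add_mem' := by intro a b ha hb; change a none + b none = 0; rw [ha, hb, add_zero]
  neg_mem' := by intro a ha; change -(a none) = 0; rw [ha, neg_zero]

/-- The box topology on a countable product. -/
def boxTopology (G : ℕ → Type*) [∀ n, TopologicalSpace (G n)] :
    TopologicalSpace (Π n, G n) :=
  TopologicalSpace.generateFrom
    {S | ∃ U : (n : ℕ) → Set (G n), (∀ n, IsOpen (U n)) ∧ S = Set.pi Set.univ U}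

/-- The direct sum `⊕ₙ Gₙ`: the subgroup of eventually-zero sequences. -/
def directSum (G : ℕ → Type*) [∀ n, AddGroup (G n)] : AddSubgroup (Π n, G n) where
  carrier := {f | ∀ᶠ n in Filter.atTop, f n = 0}
  zero_mem' := Filter.Eventually.of_forall fun _ => rfl
  add_mem' := by
    intro a b ha hb
    filter_upwards [ha, hb] with n h1 h2
    simp [Pi.add_apply, h1, h2]
  neg_mem' := by
    intro a ha
    filter_upwards [ha] with n h1
    simp [Pi.neg_apply, h1]

/-- The direct sum endowed with (the restriction of) the box topology. -/
def boxSumTopology (G : ℕ → Type*) [∀ n, AddGroup (G n)] [∀ n, TopologicalSpace (G n)] :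
    TopologicalSpace ↥(directSum G) :=
  (boxTopology G).induced Subtype.val

open Filter

/-! Levels of the fan are discrete and closed, and `∞` is the limit of any sequence of points
whose level tends to infinity. Hence a compact set containing `∞` is exactly one meeting every
level in a finite set. Since `ℤ/2` is discrete, compact-open neighbourhoods of `f` are the sets of
functions agreeing with `f` on a compact set, i.e. on `∞` and on finitely many points of each
level, which is also what a box neighbourhood prescribes. -/

theorem ContinuousMap.isOpen_setOf_eqOn {X Y : Type*} [TopologicalSpace X] [TopologicalSpace Y]
    [DiscreteTopology Y] (f : C(X, Y)) {K : Set X} (hK : IsCompact K) :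
    IsOpen {g : C(X, Y) | EqOn g f K} := by
  have hEq : {g : C(X, Y) | EqOn g f K} =
      ⋂ y ∈ f '' K, {g : C(X, Y) | MapsTo g (K ∩ f ⁻¹' {y}) {y}} := by
    ext g
    simp only [mem_ofPred_eq, mem_iInter, mem_image, EqOn, MapsTo, mem_inter_iff, mem_preimage,
      mem_singleton_iff]
    exact ⟨fun h _ _ x ⟨hx, hfx⟩ => hfx ▸ h hx,
      fun h x hx => h _ ⟨x, hx, rfl⟩ ⟨hx, rfl⟩⟩
  rw [hEq]
  exact (hK.image f.continuous).finite_of_discrete.isOpen_biInter fun y _ =>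
    ContinuousMap.isOpen_setOfPred_mapsTo
      (hK.inter_right ((isClosed_discrete _).preimage f.continuous)) (isOpen_discrete _)

theorem exists_finite_eqOn_subset_of_isOpen_pi {ι Y : Type*} [TopologicalSpace Y]
    {U : Set (ι → Y)} (hU : IsOpen U) {x : ι → Y} (hx : x ∈ U) :
    ∃ I : Set ι, I.Finite ∧ {y | EqOn y x I} ⊆ U := by
  obtain ⟨I, u, hu, hIu⟩ := isOpen_pi_iff.1 hU x hx
  exact ⟨I, I.finite_toSet, fun y hy => hIu fun a ha => (hy ha).symm ▸ (hu a ha).2⟩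

namespace FanPt

variable {κ : ℕ → Cardinal}

theorem isOpen_iff {S : Set (FanPt κ)} :
    IsOpen S ↔
      (none ∈ S → ∃ N, ∀ m ≥ N, ∀ a : (κ m).out, (some ⟨m, a⟩ : FanPt κ) ∈ S) :=
  Iff.rfl

theorem isOpen_of_none_notMem {S : Set (FanPt κ)} (h : none ∉ S) : IsOpen S :=
  isOpen_iff.2 fun h' => absurd h' h

theorem isClosed_range_some_mk (n : ℕ) :
    IsClosed (range (α := FanPt κ) fun a : (κ n).out => some ⟨n, a⟩) := by
  refine ⟨isOpen_iff.2 fun _ => ⟨n + 1, fun m hm a ⟨b, hb⟩ => ?_⟩⟩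
  have : n = m := congrArg Sigma.fst (Option.some.inj hb)
  omega

theorem isDiscrete_of_none_notMem {S : Set (FanPt κ)} (h : none ∉ S) : IsDiscrete S :=
  isDiscrete_iff_forall_mem_exists_isOpen.2 fun x hx =>
    ⟨{x}, isOpen_of_none_notMem fun h' => h (h' ▸ hx), singleton_inter_of_mem hx⟩

theorem eventually_apply_eq_apply_none {Y : Type*} [TopologicalSpace Y] [DiscreteTopology Y]
    (f : C(FanPt κ, Y)) :
    ∀ᶠ n in atTop, ∀ a : (κ n).out, f (some ⟨n, a⟩) = f none := by
  obtain ⟨N, hN⟩ := isOpen_iff.1 ((isOpen_discrete {f none}).preimage f.continuous) rfl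
  exact eventually_atTop.2 ⟨N, hN⟩

theorem tendsto_nhds_none {α : Type*} {l : Filter α} {p : α → Σ n, (κ n).out}
    (hp : Tendsto (fun i => (p i).1) l atTop) :
    Tendsto (β := FanPt κ) (fun i => some (p i)) l (𝓝 none) :=
  tendsto_nhds.2 fun _ hS h0 =>
    let ⟨N, hN⟩ := isOpen_iff.1 hS h0
    (hp.eventually_ge_atTop N).mono fun i hi => hN _ hi (p i).2

def level (K : Set (FanPt κ)) (n : ℕ) : Set (κ n).out :=
  {a | (some ⟨n, a⟩ : FanPt κ) ∈ K}

theorem finite_level_of_isCompact {K : Set (FanPt κ)} (hK : IsCompact K) (n : ℕ) :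
    (level K n).Finite := by
  have hfin : (K ∩ range fun a : (κ n).out => some ⟨n, a⟩).Finite :=
    (hK.inter_right (isClosed_range_some_mk n)).finite
      (isDiscrete_of_none_notMem fun ⟨_, a, ha⟩ => Option.some_ne_none _ ha)
  have hinj : Function.Injective fun a : (κ n).out => (some ⟨n, a⟩ : FanPt κ) :=
    (Option.some_injective _).comp sigma_mk_injective
  exact (hfin.preimage hinj.injOn).subset fun a ha => ⟨ha, a, rfl⟩

theorem isCompact_of_finite_level {K : Set (FanPt κ)} (h0 : none ∈ K)
    (hK : ∀ n, (level K n).Finite) : IsCompact K := by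
  let p : (Σ n, level K n) → Σ n, (κ n).out := fun q => ⟨q.1, q.2.1⟩
  have hK_eq : K = insert none (range (α := FanPt κ) fun q => some (p q)) := by
    ext (_ | ⟨n, a⟩)
    · exact ⟨fun _ => mem_insert _ _, fun _ => h0⟩
    · refine ⟨fun h => Or.inr ⟨⟨n, a, h⟩, rfl⟩, ?_⟩
      rintro (h | ⟨q, hq⟩)
      exacts [absurd h (Option.some_ne_none _), hq ▸ q.2.2]
  have hfibres : ∀ n, Finite (Sigma.fst ⁻¹' {n} : Set (Σ n, level K n)) := fun n => by
    have := (hK n).to_subtype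
    refine Finite.Set.subset (range (Sigma.mk n)) ?_
    rintro ⟨m, a⟩ rfl
    exact ⟨a, rfl⟩
  have hfst : Tendsto (fun q : Σ n, level K n => q.1) cofinite atTop :=
    Nat.cofinite_eq_atTop ▸ Tendsto.cofinite_of_finite_preimage_singleton hfibres
  rw [hK_eq]
  exact (tendsto_nhds_none (p := p) hfst).isCompact_insert_range_of_cofinite

def extendByZero {Y : Type*} [Zero Y] (g : Π n, (κ n).out → Y) : FanPt κ → Y :=
  fun x => x.elim 0 fun p => g p.1 p.2

theorem continuous_extendByZero {Y : Type*} [Zero Y] [TopologicalSpace Y]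
    {g : Π n, (κ n).out → Y} (hg : ∀ᶠ n in atTop, g n = 0) : Continuous (extendByZero g) :=
  continuous_def.2 fun S _ h0 =>
    let ⟨N, hN⟩ := eventually_atTop.1 hg
    ⟨N, fun m hm a => by
      change g m a ∈ S
      rw [hN m hm]
      exact h0⟩

end FanPt

open FanPt

/-- The map `F(f) = (f|_{κₙ × {n}})ₙ`. -/
noncomputable def fanEquiv (κ : ℕ → Cardinal) :
    ↥(Czero κ) ≃+ ↥(directSum fun n => (κ n).out → ZMod 2) where
  toFun f := ⟨fun n a => (f : C(FanPt κ, ZMod 2)) (some ⟨n, a⟩),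
    (eventually_apply_eq_apply_none f.1).mono fun _ h => funext fun a => (h a).trans f.2⟩
  invFun g := ⟨⟨extendByZero g.1, continuous_extendByZero g.2⟩, rfl⟩
  left_inv f := by
    ext (_ | _)
    exacts [f.2.symm, rfl]
  right_inv _ := rfl
  map_add' _ _ := rfl

theorem continuous_fanEquiv (κ : ℕ → Cardinal) :
    Continuous[inferInstance, boxSumTopology fun n => (κ n).out → ZMod 2] (fanEquiv κ) := by
  refine continuous_induced_rng.2 (continuous_generateFrom_iff.2 ?_)
  rintro _ ⟨U, hU, rfl⟩
  refine isOpen_iff_forall_mem_open.2 fun f hf => ?_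
  choose I hIfin hIU using fun n => exists_finite_eqOn_subset_of_isOpen_pi (hU n) (hf n trivial)
  let K : Set (FanPt κ) := {x | x.elim True fun p => p.2 ∈ I p.1}
  have hK : IsCompact K := isCompact_of_finite_level trivial hIfin
  exact ⟨Subtype.val ⁻¹' {g | EqOn g f.1 K}, fun g hg n _ => hIU n fun a ha => hg ha,
    (ContinuousMap.isOpen_setOf_eqOn f.1 hK).preimage continuous_subtype_val, fun _ _ => rfl⟩

theorem continuous_fanEquiv_symm (κ : ℕ → Cardinal) :
    Continuous[boxSumTopology fun n => (κ n).out → ZMod 2, inferInstance]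
      (fanEquiv κ).symm := by
  let := boxSumTopology fun n => (κ n).out → ZMod 2
  refine Continuous.subtype_mk (ContinuousMap.continuous_compactOpen.2 fun K hK V _ => ?_) _
  refine isOpen_iff_forall_mem_open.2 fun g hg => ?_
  refine ⟨Subtype.val ⁻¹' univ.pi fun n => (level K n).pi fun a => {g.1 n a}, ?_, ?_,
    fun n _ a _ => rfl⟩
  · rintro g' hg' (_ | ⟨n, a⟩) hx
    · exact hg hx
    · change g'.1 n a ∈ V
      rw [hg' n trivial a hx]
      exact hg hx
  · exact ⟨_, TopologicalSpace.isOpen_generateFrom_of_mem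
      ⟨_, fun n => isOpen_set_pi (finite_level_of_isCompact hK n) fun _ _ => isOpen_discrete _,
        rfl⟩, rfl⟩

theorem statement3_general (κ : ℕ → Cardinal) :
    ∃ F : ↥(Czero κ) ≃+ ↥(directSum (fun n => (κ n).out → ZMod 2)),
      (∀ (f : ↥(Czero κ)) (n : ℕ) (a : (κ n).out),
        ((F f : ↥(directSum (fun n => (κ n).out → ZMod 2))) :
            Π n, (κ n).out → ZMod 2) n a = (f : C(FanPt κ, ZMod 2)) (Option.some ⟨n, a⟩)) ∧
      Continuous[inferInstance, boxSumTopology (fun n => (κ n).out → ZMod 2)] ⇑F ∧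
      Continuous[boxSumTopology (fun n => (κ n).out → ZMod 2), inferInstance] ⇑F.symm :=
  ⟨fanEquiv κ, fun _ _ _ => rfl, continuous_fanEquiv κ, continuous_fanEquiv_symm κ⟩

/-- The map `F : C⁰(M_κ, 2) → ⊕ₙ 2^{κₙ}`, `F(f) = (f|_{κₙ × {n}})ₙ`, is a
topological group isomorphism onto the direct sum `⊕ₙ 2^{κₙ}` with the box topology. -/
theorem statement3 (κ : ℕ → Cardinal) (hκ : ∀ n, κ n ≠ 0) :
    ∃ F : ↥(Czero κ) ≃+ ↥(directSum (fun n => (κ n).out → ZMod 2)),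
      (∀ (f : ↥(Czero κ)) (n : ℕ) (a : (κ n).out),
        ((F f : ↥(directSum (fun n => (κ n).out → ZMod 2))) :
            Π n, (κ n).out → ZMod 2) n a = (f : C(FanPt κ, ZMod 2)) (Option.some ⟨n, a⟩)) ∧
      Continuous[inferInstance, boxSumTopology (fun n => (κ n).out → ZMod 2)] ⇑F ∧
      Continuous[boxSumTopology (fun n => (κ n).out → ZMod 2), inferInstance] ⇑F.symm :=
  statement3_general κ
end

section
/- With L, A = {f_{p,q}} as above: the zero function is the UNIQUE cluster point of A in C(L,2) with the compact-open topology. That is, if g ∈ C(L,2), g ∉ A, and every neighborhood of g meets A, then g = 0. -/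
open Topology Set

/-- The countably infinite metric fan `M = (ω × ℕ) ∪ {∞}`: `none` is the point `∞`,
`some (α, n)` is the point `(α, n)` of `ω × {n}`. -/
def FanM : Type := Option (ℕ × ℕ)

/-- The fan topology on `M`: points of `ω × ℕ` are isolated and the basic neighborhoods of
`∞` are `U(N) = {(α, n) : n ≥ N} ∪ {∞}`. -/
instance : TopologicalSpace FanM where
  IsOpen S := (none ∈ S) → ∃ N : ℕ, ∀ α n : ℕ, N ≤ n → (Option.some (α, n) : FanM) ∈ S
  isOpen_univ := fun _ => ⟨0, fun _ _ _ => trivial⟩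
  isOpen_inter := by
    intro s t hs ht hmem
    obtain ⟨Ns, hNs⟩ := hs hmem.1
    obtain ⟨Nt, hNt⟩ := ht hmem.2
    exact ⟨max Ns Nt, fun α n hn =>
      ⟨hNs α n (le_trans (le_max_left _ _) hn), hNt α n (le_trans (le_max_right _ _) hn)⟩⟩
  isOpen_sUnion := by
    intro S hS hmem
    obtain ⟨t, htS, hnt⟩ := hmem
    obtain ⟨N, hN⟩ := hS t htS hnt
    exact ⟨N, fun α n hn => ⟨t, htS, hN α n hn⟩⟩

/-- The convergent sequence `s = {0} ∪ {1/n : n ∈ ℕ, n ≥ 1} ⊆ ℝ`. -/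
def sSet : Set ℝ := {x | x = 0 ∨ ∃ n : ℕ, 0 < n ∧ x = 1 / (n : ℝ)}

/-- The space `L = M ⊔ (ℕ × s)`: the topological sum of the metric fan and countably many
copies of the convergent sequence. -/
def Lspace : Type := FanM ⊕ (ℕ × ↥sSet)

instance : TopologicalSpace Lspace := instTopologicalSpaceSum

/-- The point `∞ ∈ M ⊆ L`. -/
def infPt : Lspace := Sum.inl none

/-- The point `a_{p,q} = (p, p+q) ∈ M ⊆ L`. -/
def aPt (p q : ℕ) : Lspace := Sum.inl (Option.some (p, p + q))

lemma one_div_mem_sSet (m : ℕ) : (1 / (m : ℝ)) ∈ sSet := by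
  rcases Nat.eq_zero_or_pos m with h | h
  · exact Or.inl (by simp [h])
  · exact Or.inr ⟨m, h, rfl⟩

/-- The point `b_{p,q} = (p, 1/(p+q)) ∈ ℕ × s ⊆ L`. -/
noncomputable def bPt (p q : ℕ) : Lspace :=
  Sum.inr (p, ⟨1 / ((p + q : ℕ) : ℝ), one_div_mem_sSet _⟩)

/-- The point `c_p = (p, 0) ∈ ℕ × s ⊆ L`. -/
def cPt (p : ℕ) : Lspace := Sum.inr (p, ⟨0, Or.inl rfl⟩)

/-- The set `A = {f_{p,q} : p, q ∈ ℕ, p, q ≥ 1} ⊆ C(L, 2)`, where `f_{p,q}` is the continuous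
function with value `1` exactly at the two points `a_{p,q}` and `b_{p,q}`. -/
def setA : Set C(Lspace, ZMod 2) :=
  {f | ∃ p q : ℕ, 0 < p ∧ 0 < q ∧ ∀ x : Lspace, f x = 1 ↔ (x = aPt p q ∨ x = bPt p q)}

lemma pair_unique {p q p' q' : ℕ} (hp : 0 < p) (hp' : 0 < p') (x : Lspace)
    (h1 : x = aPt p q ∨ x = bPt p q) (h2 : x = aPt p' q' ∨ x = bPt p' q') :
    p = p' ∧ q = q' := by
  rcases h1 with h1 | h1 <;> rcases h2 with h2 | h2 <;> rw [h1] at h2 <;>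
      simp only [aPt, bPt] at h2
  · injection h2 with h
    injection h with h
    rw [Prod.mk.injEq] at h
    exact ⟨h.1, by omega⟩
  · exact absurd h2 (by simp)
  · exact absurd h2 (by simp)
  · injection h2 with h
    rw [Prod.mk.injEq, Subtype.mk.injEq] at h
    have hpq : ((p + q : ℕ) : ℝ) = ((p' + q' : ℕ) : ℝ) := by
      have h3 := h.2
      field_simp at h3
      exact_mod_cast h3.symm
    have : p + q = p' + q' := by exact_mod_cast hpq
    exact ⟨h.1, by omega⟩

/-- The zero function is the unique cluster point of `A = {f_{p,q}}` in
`C(L, 2)` with the compact-open topology: every element of `closure A \ A` equals `0`. -/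
theorem statement7 (g : C(Lspace, ZMod 2)) (hg : g ∈ closure setA) (hgA : g ∉ setA) :
    g = 0 := by
  by_contra hne
  have hzm : ∀ a : ZMod 2, a ≠ 1 → a = 0 := by decide
  -- there is a point where g = 1
  have hx : ∃ x : Lspace, g x = 1 := by
    by_contra h
    push_neg at h
    apply hne
    ext z
    exact hzm _ (h z)
  obtain ⟨x, hx1⟩ := hx
  -- find the pair (p,q) whose support contains x
  have hU1 : ∃ f ∈ setA, f x = 1 := by
    have hopen : IsOpen {f : C(Lspace, ZMod 2) | f x = 1} := by
      have : {f : C(Lspace, ZMod 2) | f x = 1}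
          = (fun f : C(Lspace, ZMod 2) => f x) ⁻¹' {1} := rfl
      rw [this]
      exact (continuous_eval_const x).isOpen_preimage _ (isOpen_discrete _)
    obtain ⟨f, hfU, hfA⟩ := mem_closure_iff.mp hg _ hopen hx1
    exact ⟨f, hfA, hfU⟩
  obtain ⟨f0, hf0A, hf0x⟩ := hU1
  obtain ⟨p, q, hp, hq, hf0⟩ := hf0A
  have hxab : x = aPt p q ∨ x = bPt p q := (hf0 x).mp hf0x
  apply hgA
  refine ⟨p, q, hp, hq, fun z => ?_⟩
  -- use the neighborhood fixing values at x and z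
  have hopen : IsOpen {f : C(Lspace, ZMod 2) | f x = 1 ∧ f z = g z} := by
    have : {f : C(Lspace, ZMod 2) | f x = 1 ∧ f z = g z}
        = (fun f : C(Lspace, ZMod 2) => f x) ⁻¹' {1}
          ∩ (fun f : C(Lspace, ZMod 2) => f z) ⁻¹' {g z} := rfl
    rw [this]
    exact ((continuous_eval_const x).isOpen_preimage _ (isOpen_discrete _)).inter
      ((continuous_eval_const z).isOpen_preimage _ (isOpen_discrete _))
  obtain ⟨f, ⟨hfx, hfz⟩, hfA⟩ := mem_closure_iff.mp hg _ hopen ⟨hx1, rfl⟩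
  obtain ⟨p', q', hp', hq', hf⟩ := hfA
  obtain ⟨hpp, hqq⟩ := pair_unique hp' hp x ((hf x).mp hfx) hxab
  subst hpp; subst hqq
  rw [← hfz]
  exact hf z
end

section
/- Let L and the points a_{p,q}, b_{p,q}, c_p = (p, 0) ∈ ℕ × s be as above. For p, q ∈ ℕ define the open set U_{p,q} = {h ∈ C(L,2) : h(a_{p,q}) = h(b_{p,q}) = 1, h(∞) = h(c_p) = 0} in the compact-open topology. Then for every compact subset K of C(L,2), the set {(p,q) ∈ ℕ × ℕ : U_{p,q} ∩ K ≠ ∅} is finite. -/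
open Topology Set

/-- The open set `U_{p,q} = {h ∈ C(L,2) : h(a_{p,q}) = h(b_{p,q}) = 1, h(∞) = h(c_p) = 0}`. -/
def Upq (p q : ℕ) : Set C(Lspace, ZMod 2) :=
  {h | h (aPt p q) = 1 ∧ h (bPt p q) = 1 ∧ h infPt = 0 ∧ h (cPt p) = 0}

/-!
A continuous `2`-valued function on a compact space takes finitely many values, so `C(C, 2)` is
discrete for compact `C`, and a compact `K ⊆ C(L, 2)` restricts to a finite family on `C`. Since
`a_{p,q} = (p, p + q) → ∞` along the cofinite filter of `ℕ × ℕ`, taking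
`C = {∞} ∪ {a_{p,q}}` shows that for all but finitely many `(p, q)` every `h ∈ K` has
`h(a_{p,q}) = h(∞)`, which excludes `h ∈ U_{p,q}`.
-/

open Filter

namespace ContinuousMap

variable {X Y : Type*} [TopologicalSpace X] [TopologicalSpace Y] [DiscreteTopology Y]

/-- A continuous map `f` on a compact space into a discrete space takes finitely many values,
so `{f}` is the finite intersection of the subbasic sets `{g | g (f ⁻¹' {y}) ⊆ {y}}`. -/
instance discreteTopology_of_compactSpace [CompactSpace X] : DiscreteTopology C(X, Y) := by
  refine discreteTopology_iff_isOpen_singleton.2 fun f => ?_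
  have hfin : (range f).Finite := (isCompact_range f.continuous).finite_of_discrete
  have hsingleton : {f} = ⋂ y ∈ range f, {g : C(X, Y) | MapsTo g (f ⁻¹' {y}) {y}} := by
    ext g
    simp only [mem_singleton_iff, mem_iInter, mem_range, forall_exists_index,
      forall_apply_eq_imp_iff, mem_ofPred_eq]
    refine ⟨fun hg x y hy => hg ▸ hy, fun hg => ext fun x => hg x rfl⟩
  rw [hsingleton]
  exact hfin.isOpen_biInter fun y _ =>
    isOpen_setOfPred_mapsTo ((isClosed_discrete _).preimage f.continuous).isCompact
      (isOpen_discrete _)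

theorem finite_restrict_image_of_isCompact {K : Set C(X, Y)} (hK : IsCompact K) {s : Set X}
    (hs : IsCompact s) : (restrict s '' K).Finite :=
  have := isCompact_iff_compactSpace.1 hs
  (hK.image (continuous_restrict s)).finite_of_discrete

/-- Restricted to the compact set `insert x (range g)`, the family `K` becomes finite. -/
theorem eventually_forall_apply_eq_of_isCompact {K : Set C(X, Y)} (hK : IsCompact K)
    {ι : Type*} {l : Filter ι} {g : ι → X} {x : X} (hg : Tendsto g l (𝓝 x))
    (hC : IsCompact (insert x (range g))) : ∀ᶠ i in l, ∀ f ∈ K, f (g i) = f x := by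
  set C := insert x (range g)
  let x' : C := ⟨x, mem_insert _ _⟩
  let g' : ι → C := fun i => ⟨g i, mem_insert_of_mem _ (mem_range_self i)⟩
  have hg' : Tendsto g' l (𝓝 x') := tendsto_subtype_rng.2 hg
  have hfinite : ∀ᶠ i in l, ∀ f ∈ restrict C '' K, f (g' i) = f x' :=
    (finite_restrict_image_of_isCompact hK hC).eventually_all.2 fun f _ =>
      ((f.continuous.tendsto x').comp hg').eventually_mem ((isOpen_discrete {f x'}).mem_nhds rfl)
  filter_upwards [hfinite] with i hi f hf using hi _ ⟨f, hf, rfl⟩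

end ContinuousMap

theorem tendsto_aPt_cofinite : Tendsto (fun pq : ℕ × ℕ => aPt pq.1 pq.2) cofinite (𝓝 infPt) := by
  refine tendsto_nhds.2 fun U hU hinf => mem_cofinite.2 ?_
  obtain ⟨N, hN⟩ := (isOpen_sum_iff.1 hU).1 hinf
  refine ((finite_Iio N).prod (finite_Iio N)).subset fun ⟨p, q⟩ hpq => ?_
  by_contra hlarge
  exact hpq (hN p (p + q) (by simp only [mem_prod, mem_Iio] at hlarge; omega))

/-- For every compact subset `K` of `C(L, 2)` (compact-open topology), the set
of pairs `(p, q)` with `U_{p,q} ∩ K ≠ ∅` is finite. -/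
theorem statement8 (K : Set C(Lspace, ZMod 2)) (hK : IsCompact K) :
    {pq : ℕ × ℕ | 0 < pq.1 ∧ 0 < pq.2 ∧ (Upq pq.1 pq.2 ∩ K).Nonempty}.Finite := by
  have hev := ContinuousMap.eventually_forall_apply_eq_of_isCompact hK tendsto_aPt_cofinite
    tendsto_aPt_cofinite.isCompact_insert_range_of_cofinite
  refine (eventually_cofinite.1 hev).subset ?_
  rintro ⟨p, q⟩ ⟨-, -, f, ⟨ha, -, hinf, -⟩, hfK⟩ hconst
  have := hconst f hfK
  rw [ha, hinf] at this
  exact one_ne_zero this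
end

section
/- Suppose a Tychonoff (completely regular Hausdorff) space X admits a family {Uᵢ : i ∈ I} of open subsets, points {aᵢ : i ∈ I} with aᵢ ∈ Uᵢ for all i, and a point z ∈ X such that (a) for each compact C ⊆ X the set {i ∈ I : C ∩ Uᵢ ≠ ∅} is finite, and (b) z is a cluster point of {aᵢ : i ∈ I}. Then X is not an Ascoli space: there exists a compact subset K of C_k(X, ℝ) (compact-open topology) that is not evenly continuous. -/
open Topology Set Filter

/-!
Pick continuous `fᵢ : X → ℝ` with `fᵢ (aᵢ) = 1` and `fᵢ = 0` off `Uᵢ`. Since a compact set meets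
only finitely many `Uᵢ`, every compact set lies in the zero set of all but finitely many `fᵢ`, so
`fᵢ → 0` in `C_k(X, ℝ)` along the cofinite filter and `K = {0} ∪ {fᵢ}` is compact. As `z` is a
cluster point of the `aᵢ` and `X` is T₁, every neighbourhood of `(z, 0)` in `X × K` contains some
`(aᵢ, fᵢ)`, where the evaluation map takes the value `1`; so it is discontinuous at `(z, 0)`.
-/

theorem CompletelyRegularSpace.exists_continuousMap_eq_one_eqOn_zero {X : Type*}
    [TopologicalSpace X] [CompletelyRegularSpace X] {U : Set X} (hU : IsOpen U) {x : X}
    (hx : x ∈ U) : ∃ f : C(X, ℝ), f x = 1 ∧ EqOn f 0 Uᶜ := by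
  obtain ⟨g, hg, hgx, hgU⟩ := completely_regular_isOpen x U hU hx
  refine ⟨⟨fun y => 1 - (g y : ℝ), by fun_prop⟩, by simp [hgx], fun y hy => ?_⟩
  simp [hgU hy]

theorem ContinuousMap.tendsto_of_forall_isCompact_eventually_eqOn {α X Y : Type*}
    [TopologicalSpace X] [TopologicalSpace Y] {l : Filter α} {f : α → C(X, Y)} {g : C(X, Y)}
    (h : ∀ C, IsCompact C → ∀ᶠ i in l, EqOn (f i) g C) : Tendsto f l (𝓝 g) := by
  refine tendsto_nhds_compactOpen.mpr fun C hC V _ hgV => ?_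
  filter_upwards [h C hC] with i hi
  exact fun x hx => hi hx ▸ hgV hx

theorem mem_closure_range_prodMk_of_tendsto_cofinite {ι X Y : Type*} [TopologicalSpace X]
    [T1Space X] [TopologicalSpace Y] {a : ι → X} {f : ι → Y} {z : X} {y : Y}
    (hz : z ∈ closure (range a \ {z})) (hf : Tendsto f cofinite (𝓝 y)) :
    (z, y) ∈ closure (range fun i => (a i, f i)) := by
  refine mem_closure_iff_nhds.mpr fun N hN => ?_
  rw [nhds_prod_eq] at hN
  obtain ⟨W, hW, V, hV, hWV⟩ := mem_prod_iff.mp hN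
  have hbad : {i | f i ∉ V}.Finite := hf hV
  have hW' : W \ (a '' {i | f i ∉ V} \ {z}) ∈ 𝓝 z :=
    sdiff_mem hW <| (hbad.image a).sdiff.isClosed.compl_mem_nhds fun h => h.2 rfl
  obtain ⟨_, ⟨hjW, hjbad⟩, ⟨j, rfl⟩, hjz⟩ := mem_closure_iff_nhds.mp hz _ hW'
  have hjV : f j ∈ V := by_contra fun h => hjbad ⟨⟨j, h, rfl⟩, hjz⟩
  exact ⟨_, hWV ⟨hjW, hjV⟩, j, rfl⟩

/-- If a Tychonoff space `X` admits open sets `Uᵢ`, points `aᵢ ∈ Uᵢ` and a point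
`z` such that every compact set meets only finitely many `Uᵢ` and `z` is a cluster point of
`{aᵢ}`, then `X` is not Ascoli: some compact subset of `C_k(X, ℝ)` is not evenly continuous. -/
theorem statement9 {X : Type*} [TopologicalSpace X] [CompletelyRegularSpace X] [T2Space X]
    {I : Type*} (U : I → Set X) (hU : ∀ i, IsOpen (U i))
    (a : I → X) (ha : ∀ i, a i ∈ U i)
    (hfin : ∀ C : Set X, IsCompact C → {i : I | (C ∩ U i).Nonempty}.Finite)
    (z : X) (hz : z ∈ closure (Set.range a \ {z})) :
    ∃ K : Set C(X, ℝ), IsCompact K ∧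
      ¬ Continuous fun p : X × K => (p.2 : C(X, ℝ)) p.1 := by
  choose f hfa hfU using fun i =>
    CompletelyRegularSpace.exists_continuousMap_eq_one_eqOn_zero (hU i) (ha i)
  have hf : Tendsto f cofinite (𝓝 0) :=
    ContinuousMap.tendsto_of_forall_isCompact_eventually_eqOn fun C hC => by
      filter_upwards [(hfin C hC).eventually_cofinite_notMem] with i hi x hx
      exact hfU i fun hxU => hi ⟨x, hx, hxU⟩
  set K := insert 0 (range f)
  refine ⟨K, hf.isCompact_insert_range_of_cofinite, fun hcont => ?_⟩
  have hfK : Tendsto (fun i => (⟨f i, mem_insert_of_mem 0 ⟨i, rfl⟩⟩ : K)) cofinite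
      (𝓝 ⟨0, mem_insert 0 _⟩) :=
    tendsto_subtype_rng.mpr hf
  have hz0 := map_mem_closure hcont (mem_closure_range_prodMk_of_tendsto_cofinite hz hfK)
    (t := {1}) (by rintro _ ⟨i, rfl⟩; exact hfa i)
  rw [closure_singleton] at hz0
  exact zero_ne_one hz0
end

section
/- The space C_k(L, 2) is not an Ascoli space, where L = M ∪ (ℕ × s) is the topological sum of the countably infinite metric fan M and countably many copies of the convergent sequence s. -/
open Topology Set

/-!
Write `fanPt p q` for the point of spine `q` at level `p` of the fan. The compact set is
`K = {0} ∪ {probe p q}`, where `probe p q` is the indicator of the clopen set of those `f` with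
`f (fanPt p q) ≠ f infPt` and `f (bPt p q) ≠ f (cPt p)`. A compact family of maps into a discrete
space is uniformly eventually constant along any convergent sequence; hence on a compact set of
`f`s we have `f = f infPt` on all fan levels `≥ N` (by contradiction, using a sequence that
escapes to `infPt`) and `f (bPt p q) = f (cPt p)` for `q ≥ M p`. So `probe p q → 0` cofinitely,
and `K` is compact.

The function `bump p q` is `1` exactly at `fanPt p q` and at the points `t ≥ 1 / (p + q)` of the
`p`-th sequence. It tends to `0` eventually in `p`, then eventually in `q`, because a compact
subset of `L` meets only finitely many copies of the sequence and only finitely many points of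
each fan level. Since `probe p q (bump p q) = 1`, the evaluation map `C_k(L, 2) × K → ℝ` is not
continuous at `(0, 0)`.
-/

open Filter

namespace ContinuousMap

variable {X Y D : Type*} [TopologicalSpace X] [TopologicalSpace Y] [TopologicalSpace D]
  [DiscreteTopology D]

theorem tendsto_nhds_of_eventually_eqOn {ι : Type*} {l : Filter ι} {F : ι → C(X, Y)}
    {f : C(X, Y)} (h : ∀ K, IsCompact K → ∀ᶠ i in l, EqOn (F i) f K) : Tendsto F l (𝓝 f) :=
  tendsto_nhds_compactOpen.2 fun K hK _ _ hfKU =>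
    (h K hK).mono fun _ hi _ hx => hi hx ▸ hfKU hx

theorem isClopen_setOf_apply_ne (a b : X) : IsClopen {f : C(X, D) | f a ≠ f b} :=
  (isClopen_discrete {d : D × D | d.1 ≠ d.2}).preimage
    ((continuous_eval_const a).prodMk (continuous_eval_const b))

theorem isOpen_setOf_exists_mapsTo_singleton {K : Set X} (hK : IsCompact K) :
    IsOpen {f : C(X, D) | ∃ d, MapsTo f K {d}} := by
  simp only [ofPred_exists]
  exact isOpen_iUnion fun d => isOpen_setOfPred_mapsTo hK (isOpen_discrete {d})

end ContinuousMap

theorem IsCompact.exists_forall_apply_eq_of_tendsto {X D : Type*} [TopologicalSpace X]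
    [TopologicalSpace D] [DiscreteTopology D] {Q : Set C(X, D)} (hQ : IsCompact Q)
    {b : ℕ → X} {x : X} (hb : Tendsto b atTop (𝓝 x)) :
    ∃ N, ∀ f ∈ Q, ∀ k ≥ N, f (b k) = f x := by
  set E : ℕ → Set X := fun N => insert x (range fun k => b (k + N))
  have hE : ∀ N, IsCompact (E N) := fun N =>
    (hb.comp (tendsto_add_atTop_nat N)).isCompact_insert_range
  have hE_anti : Antitone E := by
    intro M N hMN y hy
    rcases hy with rfl | ⟨k, rfl⟩
    · exact mem_insert _ _
    · exact mem_insert_of_mem _ ⟨k + (N - M), congrArg b (by omega)⟩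
  have hcover : Q ⊆ ⋃ N, {f : C(X, D) | ∃ d, MapsTo f (E N) {d}} := by
    intro f _
    obtain ⟨N, hN⟩ := eventually_atTop.1 <|
      (f.continuous.tendsto x).comp hb (isOpen_discrete {f x} |>.mem_nhds rfl)
    refine mem_iUnion.2 ⟨N, f x, ?_⟩
    rintro _ (rfl | ⟨k, rfl⟩)
    exacts [rfl, hN _ (Nat.le_add_left N k)]
  obtain ⟨N, hN⟩ := hQ.elim_directed_cover _
    (fun N => ContinuousMap.isOpen_setOf_exists_mapsTo_singleton (hE N)) hcover
    (Monotone.directed_le fun M N hMN f ⟨d, hd⟩ => ⟨d, hd.mono_left (hE_anti hMN)⟩)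
  refine ⟨N, fun f hf k hk => ?_⟩
  obtain ⟨d, hd⟩ := hN hf
  obtain ⟨j, rfl⟩ := Nat.exists_eq_add_of_le' hk
  exact (hd (mem_insert_of_mem _ ⟨j, rfl⟩)).trans (hd (mem_insert x _)).symm

namespace FanM

theorem isOpen_iff {S : Set FanM} :
    IsOpen S ↔ (none ∈ S → ∃ N : ℕ, ∀ α n : ℕ, N ≤ n → (some (α, n) : FanM) ∈ S) :=
  Iff.rfl

theorem continuous_of_eventually_eq {Y : Type*} [TopologicalSpace Y] {g : FanM → Y}
    (h : ∃ N : ℕ, ∀ α n : ℕ, N ≤ n → g (some (α, n)) = g none) : Continuous g := by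
  refine continuous_def.2 fun S _ hS => ?_
  obtain ⟨N, hN⟩ := h
  exact ⟨N, fun α n hn => show g _ ∈ S from hN α n hn ▸ hS⟩

theorem tendsto_some_nhds_none {g : ℕ → ℕ × ℕ} (hg : Tendsto (fun k => (g k).2) atTop atTop) :
    Tendsto (β := FanM) (fun k => some (g k)) atTop (𝓝 none) :=
  tendsto_nhds.2 fun S hS hnone => by
    obtain ⟨N, hN⟩ := isOpen_iff.1 hS hnone
    exact (hg.eventually_ge_atTop N).mono fun k hk => hN _ _ hk

theorem isClopen_singleton_some (a : ℕ × ℕ) : IsClopen ({some a} : Set FanM) := by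
  refine ⟨⟨isOpen_iff.2 fun _ => ⟨a.2 + 1, fun α n hn h => ?_⟩⟩, isOpen_iff.2 fun h => ?_⟩
  · obtain rfl : (α, n) = a := Option.some_inj.1 h
    omega
  · exact absurd h.symm (Option.some_ne_none a)

theorem finite_setOf_some_mem_of_isCompact {Q : Set FanM} (hQ : IsCompact Q) (d : ℕ) :
    {α | (some (α, d) : FanM) ∈ Q}.Finite := by
  let level : FanM → ℕ := fun o => o.elim 0 fun a => if a.2 = d then a.1 + 1 else 0
  have hlevel : Continuous level :=
    continuous_of_eventually_eq ⟨d + 1, fun α n hn => by simp [level]; omega⟩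
  refine ((hQ.image hlevel).finite_of_discrete.preimage (add_left_injective 1).injOn).subset ?_
  exact fun α hα => ⟨_, hα, by simp [level]⟩

end FanM

theorem one_div_le_iff_one_div_add_one_lt_of_mem_sSet {m : ℕ} (hm : 0 < m) {t : ℝ}
    (ht : t ∈ sSet) : 1 / (m : ℝ) ≤ t ↔ 1 / ((m : ℝ) + 1) < t := by
  have hm' : (0 : ℝ) < m := by exact_mod_cast hm
  rcases ht with rfl | ⟨k, hk, rfl⟩
  · simp only [iff_false_intro (not_le.2 (one_div_pos.2 hm')), false_iff, not_lt]
    positivity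
  · have hk' : (0 : ℝ) < k := by exact_mod_cast hk
    rw [one_div_le_one_div hm' hk', one_div_lt_one_div (by positivity) hk']
    norm_cast
    omega

theorem isClopen_setOf_one_div_le_sSet (m : ℕ) : IsClopen {t : ↥sSet | 1 / (m : ℝ) ≤ t} := by
  rcases Nat.eq_zero_or_pos m with rfl | hm
  · convert isClopen_univ
    simp only [CharP.cast_eq_zero, div_zero, eq_univ_iff_forall, mem_ofPred_eq]
    rintro ⟨t, rfl | ⟨k, -, rfl⟩⟩ <;> simp
  · refine ⟨isClosed_le continuous_const continuous_subtype_val, ?_⟩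
    rw [show {t : ↥sSet | 1 / (m : ℝ) ≤ t} = {t : ↥sSet | 1 / ((m : ℝ) + 1) < t} from
      ext fun t => one_div_le_iff_one_div_add_one_lt_of_mem_sSet hm t.2]
    exact isOpen_lt continuous_const continuous_subtype_val

theorem Filter.curry_atTop_le_cofinite : (atTop.curry atTop : Filter (ℕ × ℕ)) ≤ cofinite :=
  curry_le_prod.trans (prod_atTop_atTop_eq.trans_le atTop_le_cofinite)

instance Filter.curry_atTop_neBot : (atTop.curry atTop : Filter (ℕ × ℕ)).NeBot :=
  frequently_true_iff_neBot _ |>.1 <| (frequently_curry_iff _).2 <|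
    Frequently.of_forall fun _ => Frequently.of_forall fun _ => trivial

def fanPt (p q : ℕ) : Lspace := Sum.inl (some (q, p))

theorem tendsto_inl_some_infPt {g : ℕ → ℕ × ℕ} (hg : Tendsto (fun k => (g k).2) atTop atTop) :
    Tendsto (fun k => (Sum.inl (some (g k)) : Lspace)) atTop (𝓝 infPt) :=
  (continuous_inl.tendsto _).comp (FanM.tendsto_some_nhds_none hg)

theorem tendsto_bPt (p : ℕ) : Tendsto (bPt p) atTop (𝓝 (cPt p)) := by
  have h : Tendsto (fun q => 1 / ((p + q : ℕ) : ℝ)) atTop (𝓝 0) :=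
    tendsto_one_div_atTop_nhds_zero_nat.comp ((tendsto_add_atTop_nat p).congr fun q => add_comm q p)
  exact (continuous_inr.tendsto _).comp (tendsto_const_nhds.prodMk_nhds (tendsto_subtype_rng.2 h))

theorem finite_setOf_inr_mem_of_isCompact {X ι Y : Type*} [TopologicalSpace X]
    [TopologicalSpace ι] [DiscreteTopology ι] [TopologicalSpace Y] {Q : Set (X ⊕ ι × Y)}
    (hQ : IsCompact Q) : {i | ∃ y, Sum.inr (i, y) ∈ Q}.Finite :=
  ((IsClosedEmbedding.inr.isCompact_preimage hQ).image continuous_fst).finite_of_discrete.subset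
    fun i ⟨y, hy⟩ => ⟨(i, y), hy, rfl⟩

theorem finite_setOf_inl_some_mem_of_isCompact {Q : Set Lspace} (hQ : IsCompact Q) (d : ℕ) :
    {α | (Sum.inl (some (α, d)) : Lspace) ∈ Q}.Finite :=
  FanM.finite_setOf_some_mem_of_isCompact (IsClosedEmbedding.inl.isCompact_preimage hQ) d

section UniformOnCompacts

variable {D : Type*} [TopologicalSpace D] [DiscreteTopology D] {Q : Set C(Lspace, D)}

theorem IsCompact.exists_forall_inl_some_eq_infPt (hQ : IsCompact Q) :
    ∃ N, ∀ f ∈ Q, ∀ α n, N ≤ n → f (Sum.inl (some (α, n))) = f infPt := by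
  by_contra! h
  choose f hfQ α n hn hne using h
  obtain ⟨N, hN⟩ := hQ.exists_forall_apply_eq_of_tendsto
    (tendsto_inl_some_infPt (g := fun k => (α k, n k)) (tendsto_atTop_mono hn tendsto_id))
  exact hne N (hN _ (hfQ N) N le_rfl)

theorem IsCompact.exists_forall_bPt_eq_cPt (hQ : IsCompact Q) (p : ℕ) :
    ∃ M, ∀ f ∈ Q, ∀ q ≥ M, f (bPt p q) = f (cPt p) :=
  hQ.exists_forall_apply_eq_of_tendsto (tendsto_bPt p)

end UniformOnCompacts

def bumpSet (p q : ℕ) : Set Lspace :=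
  Sum.inl '' {some (q, p)} ∪ Sum.inr '' ({p} ×ˢ {t : ↥sSet | 1 / ((p + q : ℕ) : ℝ) ≤ t})

theorem isClopen_bumpSet (p q : ℕ) : IsClopen (bumpSet p q) := by
  have h₁ := FanM.isClopen_singleton_some (q, p)
  have h₂ := (isClopen_discrete {p}).prod (isClopen_setOf_one_div_le_sSet (p + q))
  exact ⟨(isClosedMap_inl _ h₁.1).union (isClosedMap_inr _ h₂.1),
    (isOpenMap_inl _ h₁.2).union (isOpenMap_inr _ h₂.2)⟩

noncomputable def bump (p q : ℕ) : C(Lspace, ZMod 2) :=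
  LocallyConstant.charFn (ZMod 2) (isClopen_bumpSet p q)

theorem bump_apply_of_mem {p q : ℕ} {x : Lspace} (hx : x ∈ bumpSet p q) : bump p q x = 1 :=
  (LocallyConstant.charFn_eq_one _ x (isClopen_bumpSet p q)).2 hx

theorem bump_apply_of_notMem {p q : ℕ} {x : Lspace} (hx : x ∉ bumpSet p q) : bump p q x = 0 :=
  (LocallyConstant.charFn_eq_zero _ x (isClopen_bumpSet p q)).2 hx

def probeSet (p q : ℕ) : Set C(Lspace, ZMod 2) :=
  {f | f (fanPt p q) ≠ f infPt} ∩ {f | f (bPt p q) ≠ f (cPt p)}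

theorem isClopen_probeSet (p q : ℕ) : IsClopen (probeSet p q) :=
  (ContinuousMap.isClopen_setOf_apply_ne _ _).inter (ContinuousMap.isClopen_setOf_apply_ne _ _)

noncomputable def probe (p q : ℕ) : C(C(Lspace, ZMod 2), ℝ) :=
  LocallyConstant.charFn ℝ (isClopen_probeSet p q)

theorem probe_apply_of_notMem {p q : ℕ} {f : C(Lspace, ZMod 2)} (hf : f ∉ probeSet p q) :
    probe p q f = 0 :=
  (LocallyConstant.charFn_eq_zero _ f (isClopen_probeSet p q)).2 hf

theorem bump_mem_probeSet {p q : ℕ} (hpq : 0 < p + q) : bump p q ∈ probeSet p q := by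
  have hpos : (0 : ℝ) < 1 / ((p + q : ℕ) : ℝ) := one_div_pos.2 (by exact_mod_cast hpq)
  have hfan : bump p q (fanPt p q) = 1 := bump_apply_of_mem (.inl ⟨_, rfl, rfl⟩)
  have hinf : bump p q infPt = 0 := bump_apply_of_notMem <| by
    rintro (⟨_, rfl, h⟩ | ⟨_, -, h⟩)
    exacts [Option.some_ne_none _ (Sum.inl_injective h), Sum.inr_ne_inl h]
  have hb : bump p q (bPt p q) = 1 :=
    bump_apply_of_mem (.inr ⟨_, ⟨mem_singleton p, by simp⟩, rfl⟩)
  have hc : bump p q (cPt p) = 0 := bump_apply_of_notMem <| by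
    rintro (⟨_, -, h⟩ | ⟨⟨r, t⟩, ⟨-, ht⟩, h⟩)
    · exact Sum.inl_ne_inr h
    · cases Sum.inr_injective h
      exact hpos.not_ge ht
  show bump p q (fanPt p q) ≠ bump p q infPt ∧ bump p q (bPt p q) ≠ bump p q (cPt p)
  rw [hfan, hinf, hb, hc]
  decide

theorem probe_bump {p q : ℕ} (hpq : 0 < p + q) : probe p q (bump p q) = 1 :=
  (LocallyConstant.charFn_eq_one _ _ (isClopen_probeSet p q)).2 (bump_mem_probeSet hpq)

theorem tendsto_bump :
    Tendsto (fun pq : ℕ × ℕ => bump pq.1 pq.2) (atTop.curry atTop) (𝓝 0) := by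
  refine ContinuousMap.tendsto_nhds_of_eventually_eqOn fun Q hQ => eventually_curry_iff.2 ?_
  have hcopies := (finite_setOf_inr_mem_of_isCompact hQ).eventually_cofinite_notMem
  rw [Nat.cofinite_eq_atTop] at hcopies
  refine hcopies.mono fun p hp => ?_
  have hrow := (finite_setOf_inl_some_mem_of_isCompact hQ p).eventually_cofinite_notMem
  rw [Nat.cofinite_eq_atTop] at hrow
  refine hrow.mono fun q hq x hx => bump_apply_of_notMem ?_
  rintro (⟨_, rfl, rfl⟩ | ⟨⟨r, t⟩, ⟨rfl, -⟩, rfl⟩)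
  exacts [hq hx, hp ⟨t, hx⟩]

theorem tendsto_uncurry_probe : Tendsto (Function.uncurry probe) cofinite (𝓝 0) := by
  refine ContinuousMap.tendsto_nhds_of_eventually_eqOn fun Q hQ => ?_
  obtain ⟨N, hN⟩ := hQ.exists_forall_inl_some_eq_infPt
  choose M hM using hQ.exists_forall_bPt_eq_cPt
  have hgood : ∀ᶠ pq : ℕ × ℕ in cofinite, N ≤ pq.1 ∨ M pq.1 ≤ pq.2 := by
    refine eventually_cofinite.2 (((finite_Iio N).prod
      (finite_Iio ((Finset.range N).sup M))).subset fun ⟨p, q⟩ h => ?_)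
    push Not at h
    exact ⟨h.1, h.2.trans_le (Finset.le_sup (Finset.mem_range.2 h.1))⟩
  refine hgood.mono fun ⟨p, q⟩ hpq f hf => probe_apply_of_notMem ?_
  rintro ⟨hfan, hseq⟩
  rcases hpq with hp | hq
  exacts [hfan (hN f hf q p hp), hseq (hM p f hf q hq)]

/-- The space `C_k(L, 2)` is not an Ascoli space: there is a compact subset
`K` of `C_k(C_k(L, 2), ℝ)` that is not evenly continuous, i.e. for which the evaluation map
`C_k(L,2) × K → ℝ` is not (jointly) continuous. -/
theorem statement10 :
    ∃ K : Set C(C(Lspace, ZMod 2), ℝ), IsCompact K ∧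
      ¬ Continuous fun p : C(Lspace, ZMod 2) × K => (p.2 : C(C(Lspace, ZMod 2), ℝ)) p.1 := by
  set K := insert 0 (range (Function.uncurry probe))
  refine ⟨K, tendsto_uncurry_probe.isCompact_insert_range_of_cofinite, fun hcont => ?_⟩
  have hprobe : Tendsto
      (fun pq => (⟨Function.uncurry probe pq, mem_insert_of_mem _ ⟨pq, rfl⟩⟩ : K))
      (atTop.curry atTop) (𝓝 ⟨0, mem_insert _ _⟩) :=
    tendsto_subtype_rng.2 (tendsto_uncurry_probe.mono_left curry_atTop_le_cofinite)
  have hzero : Tendsto (fun pq : ℕ × ℕ => probe pq.1 pq.2 (bump pq.1 pq.2)) (atTop.curry atTop)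
      (𝓝 0) :=
    (hcont.tendsto (0, ⟨0, mem_insert _ _⟩)).comp (tendsto_bump.prodMk_nhds hprobe)
  have hone : ∀ᶠ pq : ℕ × ℕ in atTop.curry atTop, probe pq.1 pq.2 (bump pq.1 pq.2) = 1 :=
    eventually_curry_iff.2 <| (eventually_gt_atTop 0).mono fun p hp =>
      .of_forall fun q => probe_bump (Nat.add_pos_left hp q)
  exact one_ne_zero (tendsto_nhds_unique (tendsto_const_nhds.congr' (hone.mono fun _ => Eq.symm))
    hzero)
end

section
/- Let X be a zero-dimensional metric space whose derived set X' is not Lindelöf. Then C_p(X, 2) (pointwise convergence topology) contains a closed subspace homeomorphic to ℕ^{ω₁}, the product of ω₁ copies of the countable discrete space ℕ. -/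
open Topology Set

open Filter

universe u

private theorem emb_of_not_countable' {X : Type u} (D : Set X) (h : ¬ D.Countable) :
    Nonempty ((Cardinal.aleph 1).out ↪ D) := by
  rw [Cardinal.countable_iff_lt_aleph_one, not_lt] at h
  rw [← Cardinal.lift_mk_le', Cardinal.mk_out, Cardinal.lift_aleph]
  have := Cardinal.lift_le.{u}.mpr h
  rw [Cardinal.lift_aleph] at this
  convert this using 2
  simp

private theorem exists_sep_unc {X : Type u} [MetricSpace X] {s : Set X} (hL : ¬ IsLindelof s) :
    ∃ ε : ℝ, 0 < ε ∧ ∃ D : Set X, D ⊆ s ∧ D.Pairwise (fun x y => ε ≤ dist x y)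
      ∧ ¬ D.Countable := by
  by_contra hcon
  push_neg at hcon
  apply hL
  -- for each n, get a maximal (1/(n+1))-separated subset of s
  have hmax : ∀ n : ℕ, ∃ D : Set X, (D ⊆ s ∧ D.Pairwise (fun x y => ((n:ℝ)+1)⁻¹ ≤ dist x y)) ∧
      ∀ x ∈ s, ∃ y ∈ D, dist x y < ((n:ℝ)+1)⁻¹ := by
    intro n
    set S : Set (Set X) := {D | D ⊆ s ∧ D.Pairwise (fun x y => ((n:ℝ)+1)⁻¹ ≤ dist x y)} with hS
    obtain ⟨D, hD⟩ : ∃ D, Maximal (· ∈ S) D := by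
      apply zorn_subset
      intro c hcS hchain
      refine ⟨⋃₀ c, ⟨?_, ?_⟩, fun t ht => subset_sUnion_of_mem ht⟩
      · exact sUnion_subset fun t ht => (hcS ht).1
      · intro x hx y hy hxy
        obtain ⟨t1, ht1, hxt1⟩ := hx
        obtain ⟨t2, ht2, hyt2⟩ := hy
        rcases hchain.total ht1 ht2 with h12 | h21
        · exact (hcS ht2).2 (h12 hxt1) hyt2 hxy
        · exact (hcS ht1).2 hxt1 (h21 hyt2) hxy
    refine ⟨D, hD.1, fun x hx => ?_⟩
    by_contra hno
    push_neg at hno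
    have hins : insert x D ∈ S := by
      refine ⟨insert_subset hx hD.1.1, ?_⟩
      rw [Set.pairwise_insert]
      refine ⟨hD.1.2, fun y hy hxy => ?_⟩
      have := hno y hy
      exact ⟨this, by rwa [dist_comm]⟩
    have : insert x D ⊆ D := hD.2 hins (subset_insert x D)
    have hxD : x ∈ D := this (mem_insert x D)
    have := hno x hxD
    simp at this
    have : (0:ℝ) < ((n:ℝ)+1)⁻¹ := by positivity
    linarith
  choose D hD hDdense using hmax
  have hcnt : ∀ n, (D n).Countable := fun n =>
    hcon _ (by positivity) (D n) (hD n).1 (hD n).2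
  have hsep : TopologicalSpace.IsSeparable s := by
    refine ⟨⋃ n, D n, countable_iUnion hcnt, fun x hx => ?_⟩
    rw [Metric.mem_closure_iff]
    intro r hr
    obtain ⟨n, hn⟩ := exists_nat_one_div_lt hr
    obtain ⟨y, hy, hdy⟩ := hDdense n x hx
    refine ⟨y, mem_iUnion.mpr ⟨n, hy⟩, lt_trans ?_ hn⟩
    rwa [one_div]
  haveI : TopologicalSpace.SeparableSpace s := hsep.separableSpace
  haveI : SecondCountableTopology s := UniformSpace.secondCountable_of_separable _
  exact isLindelof_iff_LindelofSpace.mpr inferInstance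

private theorem exists_seq' {X : Type u} [MetricSpace X] {z : X} (hz : (𝓝[≠] z).NeBot)
    {U : Set X} (hU : U ∈ 𝓝 z) :
    ∃ x : ℕ → X, Function.Injective x ∧ Filter.Tendsto x Filter.atTop (𝓝 z) ∧
      ∀ n, x n ∈ U ∧ x n ≠ z := by
  have pick : ∀ r : ℝ, 0 < r → ∃ y : X, (y ∈ U ∧ y ≠ z) ∧ dist y z < r := by
    intro r hr
    have h1 : (U ∩ Metric.ball z r) ∈ 𝓝[≠] z :=
      nhdsWithin_le_nhds (Filter.inter_mem hU (Metric.ball_mem_nhds z hr))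
    have h2 : {z}ᶜ ∈ 𝓝[≠] z := self_mem_nhdsWithin
    obtain ⟨y, ⟨hyU, hyb⟩, hyz⟩ := hz.nonempty_of_mem (Filter.inter_mem h1 h2)
    exact ⟨y, ⟨hyU, hyz⟩, Metric.mem_ball.mp hyb⟩
  choose p hp1 hp2 using pick
  have hrec : ∀ (prev : {y : X // y ∈ U ∧ y ≠ z}) (n : ℕ),
      (0:ℝ) < min (dist prev.1 z) ((n:ℝ)+1)⁻¹ :=
    fun prev n => lt_min (dist_pos.mpr prev.2.2) (by positivity)
  let q : ℕ → {y : X // y ∈ U ∧ y ≠ z} := fun n => Nat.rec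
    ⟨p 1 one_pos, hp1 1 one_pos⟩
    (fun n prev => ⟨p _ (hrec prev n), hp1 _ (hrec prev n)⟩) n
  have hq : ∀ n, dist (q (n+1)).1 z < min (dist (q n).1 z) ((n:ℝ)+1)⁻¹ :=
    fun n => hp2 _ (hrec (q n) n)
  refine ⟨fun n => (q n).1, ?_, ?_, fun n => (q n).2⟩
  · have hanti : StrictAnti (fun n => dist (q n).1 z) :=
      strictAnti_nat_of_succ_lt fun n => lt_of_lt_of_le (hq n) (min_le_left _ _)
    intro a b hab
    exact hanti.injective (congrArg (fun y => dist y z) hab)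
  · rw [Metric.tendsto_atTop]
    intro r hr
    obtain ⟨n, hn⟩ := exists_nat_one_div_lt hr
    refine ⟨n + 1, fun m hm => ?_⟩
    have hanti : StrictAnti (fun n => dist (q n).1 z) :=
      strictAnti_nat_of_succ_lt fun n => lt_of_lt_of_le (hq n) (min_le_left _ _)
    have h1 : dist (q m).1 z ≤ dist (q (n+1)).1 z := hanti.antitone hm
    have h2 : dist (q (n+1)).1 z < ((n:ℝ)+1)⁻¹ := lt_of_lt_of_le (hq n) (min_le_right _ _)
    rw [one_div] at hn
    exact lt_trans (lt_of_le_of_lt h1 h2) hn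

/-- If `X` is a zero-dimensional metric space whose derived set (the set of
non-isolated points) is not Lindelöf, then `C_p(X, 2)` (with the topology of pointwise
convergence, realized as a subspace of the product `(ℤ/2)^X`) contains a closed subspace
homeomorphic to `ℕ^{ω₁}`. -/
theorem statement11 {X : Type*} [MetricSpace X]
    (hzd : TopologicalSpace.IsTopologicalBasis {s : Set X | IsClopen s})
    (hL : ¬ IsLindelof {x : X | (𝓝[≠] x).NeBot}) :
    ∃ e : ((Cardinal.aleph 1).out → ℕ) → {f : X → ZMod 2 // Continuous f},
      Topology.IsClosedEmbedding e := by
  classical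
  obtain ⟨ε, hε, D, hDs, hDsep, hDunc⟩ := exists_sep_unc hL
  obtain ⟨ι⟩ := emb_of_not_countable' D hDunc
  set I := (Cardinal.aleph 1).out with hI
  set z : I → X := fun i => (ι i).1 with hzdef
  have hzmem : ∀ i, (𝓝[≠] (z i)).NeBot := fun i => hDs (ι i).2
  have hzsep : ∀ i j, i ≠ j → ε ≤ dist (z i) (z j) := by
    intro i j hij
    exact hDsep (ι i).2 (ι j).2 (fun h => hij (ι.injective (Subtype.ext h)))
  -- clopen neighborhoods
  have hFex : ∀ i, ∃ F : Set X, IsClopen F ∧ z i ∈ F ∧ F ⊆ Metric.ball (z i) (ε/4) := by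
    intro i
    obtain ⟨Fi, hFi, hzFi, hsub⟩ := hzd.exists_subset_of_mem_open
      (Metric.mem_ball_self (show (0:ℝ) < ε/4 by positivity)) Metric.isOpen_ball
    exact ⟨Fi, hFi, hzFi, hsub⟩
  choose F hFclopen hzF hFball using hFex
  have hFsep : ∀ i j, i ≠ j → ∀ u ∈ F i, ∀ v ∈ F j, ε/2 ≤ dist u v := by
    intro i j hij u hu v hv
    have h1 : dist (z i) u < ε/4 := by
      have := hFball i hu; rw [Metric.mem_ball, dist_comm] at this; exact this
    have h2 : dist v (z j) < ε/4 := by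
      have := hFball j hv; rw [Metric.mem_ball] at this; exact this
    have h3 := hzsep i j hij
    have h4 := dist_triangle4 (z i) u v (z j)
    linarith
  have huniq : ∀ (x : X) i j (u v : X), u ∈ F i → v ∈ F j →
      dist x u < ε/4 → dist x v < ε/4 → i = j := by
    intro x i j u v hu hv h1 h2
    by_contra hij
    have h3 := hFsep i j hij u hu v hv
    have h4 := dist_triangle u x v
    rw [dist_comm u x] at h4
    linarith
  have hFdisj : ∀ i j, i ≠ j → ∀ x, x ∈ F i → x ∈ F j → False := by
    intro i j hij x h1 h2
    exact hij (huniq x i j x x h1 h2 (by simp; positivity) (by simp; positivity))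
  -- sequences
  have hseqex : ∀ i, ∃ x : ℕ → X, Function.Injective x ∧
      Filter.Tendsto x Filter.atTop (𝓝 (z i)) ∧ ∀ n, x n ∈ F i ∧ x n ≠ z i :=
    fun i => exists_seq' (hzmem i) ((hFclopen i).2.mem_nhds (hzF i))
  choose xx hxinj hxtend hxmem using hseqex
  -- clopen V's
  have hVex : ∀ i m, ∃ V : Set X, IsClopen V ∧ xx i m ∈ V ∧ V ⊆ F i ∧ z i ∉ V ∧
      ∀ k, k ≠ m → xx i k ∉ V := by
    intro i m
    set Sm : Set X := insert (z i) (xx i '' {k | k ≠ m}) with hSm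
    have hSmclosed : IsClosed Sm := by
      set sk : ℕ → ℕ := fun k => if k < m then k else k + 1 with hsk
      have hge : ∀ k, k ≤ sk k := by intro k; simp only [hsk]; split <;> omega
      have hyt : Filter.Tendsto (fun k => xx i (sk k)) Filter.atTop (𝓝 (z i)) :=
        (hxtend i).comp (tendsto_atTop_mono hge tendsto_id)
      have hrange : insert (z i) (range (fun k => xx i (sk k))) = Sm := by
        rw [hSm]
        congr 1
        apply subset_antisymm
        · rintro _ ⟨k, rfl⟩
          refine ⟨sk k, ?_, rfl⟩
          simp only [hsk, mem_setOf_eq]; split <;> omega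
        · rintro _ ⟨k, hk, rfl⟩
          simp only [mem_setOf_eq] at hk
          rcases Nat.lt_or_ge k m with hlt | hge2
          · exact ⟨k, by simp [hsk, hlt]⟩
          · have hkm : m < k := lt_of_le_of_ne hge2 (Ne.symm hk)
            refine ⟨k - 1, ?_⟩
            have h1 : ¬ (k - 1 < m) := by omega
            simp only [hsk, h1, if_false]
            congr 1
            omega
      have := hyt.isCompact_insert_range
      rw [hrange] at this
      exact this.isClosed
    have hxm : xx i m ∉ Sm := by
      rintro (h | ⟨k, hk, hke⟩)
      · exact (hxmem i m).2 h
      · exact hk (hxinj i hke)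
    obtain ⟨Vm, hVm, hxVm, hVmsub⟩ := hzd.exists_subset_of_mem_open
      (show xx i m ∈ F i ∩ Smᶜ from ⟨(hxmem i m).1, hxm⟩)
      ((hFclopen i).2.inter hSmclosed.isOpen_compl)
    refine ⟨Vm, hVm, hxVm, fun y hy => (hVmsub hy).1, ?_, ?_⟩
    · intro hz
      exact (hVmsub hz).2 (mem_insert _ _)
    · intro k hk hmem
      exact (hVmsub hmem).2 (mem_insert_of_mem _ ⟨k, hk, rfl⟩)
  choose V hVclopen hxV hVF hzV hVk using hVex
  -- U's
  set U : I → ℕ → Set X := fun i n => ⋃ m ∈ Finset.range n, V i m with hU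
  have hUclopen : ∀ i n, IsClopen (U i n) :=
    fun i n => Set.Finite.isClopen_biUnion (Finset.range n).finite_toSet
      (fun m _ => hVclopen i m)
  have hUF : ∀ i n, U i n ⊆ F i := fun i n => iUnion₂_subset fun m _ => hVF i m
  have hUmem : ∀ i n m, xx i m ∈ U i n ↔ m < n := by
    intro i n m
    simp only [hU, mem_iUnion, Finset.mem_range, exists_prop]
    constructor
    · rintro ⟨k, hk, hmem⟩
      by_contra hmn
      rcases eq_or_ne k m with rfl | hne
      · exact hmn hk
      · exact hVk i k m (Ne.symm hne) hmem
    · intro hmn; exact ⟨m, hmn, hxV i m⟩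
  have hzU : ∀ i n, z i ∉ U i n := by
    intro i n hzin
    simp only [hU, mem_iUnion, Finset.mem_range, exists_prop] at hzin
    obtain ⟨m, _, hm⟩ := hzin
    exact hzV i m hm
  -- W and e
  set W : (I → ℕ) → Set X := fun g => ⋃ i, U i (g i) with hW
  have hWmem : ∀ g x i, x ∈ F i → (x ∈ W g ↔ x ∈ U i (g i)) := by
    intro g x i hxi
    constructor
    · intro hxW
      obtain ⟨j, hj⟩ := mem_iUnion.mp hxW
      rcases eq_or_ne j i with rfl | hne
      · exact hj
      · exact absurd (hUF j _ hj) (fun hh => hFdisj j i hne x hh hxi)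
    · intro hxU; exact mem_iUnion.mpr ⟨i, hxU⟩
  have hWclopen : ∀ g, IsClopen (W g) := by
    intro g
    constructor
    · -- IsClosed
      rw [← isOpen_compl_iff]
      rw [isOpen_iff_mem_nhds]
      intro x hx
      by_cases hcase : ∃ i, (F i ∩ Metric.ball x (ε/4)).Nonempty
      · obtain ⟨i, u, huF, hub⟩ := hcase
        have hub' : dist x u < ε/4 := by
          rw [Metric.mem_ball] at hub; rw [dist_comm]; exact hub
        have hnbopen : IsOpen (Metric.ball x (ε/4) \ U i (g i)) :=
          Metric.isOpen_ball.sdiff (hUclopen i (g i)).1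
        have hxnb : x ∈ Metric.ball x (ε/4) \ U i (g i) := by
          refine ⟨Metric.mem_ball_self (by positivity), fun hxu => ?_⟩
          exact hx (mem_iUnion.mpr ⟨i, hxu⟩)
        refine Filter.mem_of_superset (hnbopen.mem_nhds hxnb) ?_
        rintro y ⟨hyb, hyU⟩ hyW
        obtain ⟨j, hyj⟩ := mem_iUnion.mp hyW
        have hyb' : dist x y < ε/4 := by
          rw [Metric.mem_ball] at hyb; rw [dist_comm]; exact hyb
        have hji : j = i := huniq x j i y u (hUF j _ hyj) huF hyb' hub'
        rw [hji] at hyj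
        exact hyU hyj
      · push_neg at hcase
        refine Filter.mem_of_superset
          (Metric.ball_mem_nhds x (show (0:ℝ) < ε/4 by positivity)) ?_
        intro y hy hyW
        obtain ⟨j, hyj⟩ := mem_iUnion.mp hyW
        exact (eq_empty_iff_forall_notMem.mp (hcase j)) y ⟨hUF j _ hyj, hy⟩
    · exact isOpen_iUnion fun i => (hUclopen i (g i)).2
  have hcont : ∀ g, Continuous (fun x => if x ∈ W g then (1 : ZMod 2) else 0) := by
    intro g
    apply Continuous.if ?_ continuous_const continuous_const
    intro a ha
    have : frontier {x | x ∈ W g} = ∅ := isClopen_iff_frontier_eq_empty.mp (hWclopen g)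
    rw [this] at ha
    exact absurd ha (notMem_empty a)
  set e : (I → ℕ) → {f : X → ZMod 2 // Continuous f} :=
    fun g => ⟨fun x => if x ∈ W g then 1 else 0, hcont g⟩ with he
  refine ⟨e, ?_⟩
  have hxxF : ∀ i m, xx i m ∈ F i := fun i m => (hxmem i m).1
  have hE1 : ∀ g i m, (e g).1 (xx i m) = if m < g i then (1:ZMod 2) else 0 := by
    intro g i m
    show (if xx i m ∈ W g then (1:ZMod 2) else 0) = _
    rw [if_congr (hWmem g _ i (hxxF i m)) rfl rfl, if_congr (hUmem i (g i) m) rfl rfl]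
  have hE2 : ∀ g i, (e g).1 (z i) = 0 := by
    intro g i
    show (if z i ∈ W g then (1:ZMod 2) else 0) = 0
    rw [if_congr (hWmem g _ i (hzF i)) rfl rfl]
    exact if_neg (hzU i (g i))
  have hE3 : ∀ g x, (∀ i, x ∉ F i) → (e g).1 x = 0 := by
    intro g x hx
    show (if x ∈ W g then (1:ZMod 2) else 0) = 0
    apply if_neg
    intro hxW
    obtain ⟨j, hj⟩ := mem_iUnion.mp hxW
    exact hx j (hUF j _ hj)
  have hE4 : ∀ g x i, x ∈ F i → (e g).1 x = if x ∈ U i (g i) then (1:ZMod 2) else 0 := by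
    intro g x i hxi
    show (if x ∈ W g then (1:ZMod 2) else 0) = _
    rw [if_congr (hWmem g _ i hxi) rfl rfl]
  -- continuity of e
  have hecont : Continuous e := by
    apply Continuous.subtype_mk
    apply continuous_pi
    intro x
    by_cases hx : ∃ i, x ∈ F i
    · obtain ⟨i, hxi⟩ := hx
      have heqfun : (fun g : I → ℕ => if x ∈ W g then (1:ZMod 2) else 0)
          = (fun n : ℕ => if x ∈ U i n then (1:ZMod 2) else 0) ∘ (fun g : I → ℕ => g i) :=
        funext fun g => hE4 g x i hxi
      rw [heqfun]
      exact continuous_of_discreteTopology.comp (continuous_apply i)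
    · push_neg at hx
      have heqfun : (fun g : I → ℕ => if x ∈ W g then (1:ZMod 2) else 0)
          = fun _ => (0:ZMod 2) := funext fun g => hE3 g x hx
      rw [heqfun]
      exact continuous_const
  -- the inverse map
  set rho : {f0 : X → ZMod 2 // Continuous f0} → I → ℕ :=
    fun f i => sInf {m | f.1 (xx i m) = 0} with hrho
  have hRho : ∀ g i, rho (e g) i = g i := by
    intro g i
    have hset : {m | (e g).1 (xx i m) = 0} = Ici (g i) := by
      ext m
      show (e g).1 (xx i m) = 0 ↔ g i ≤ m
      rw [hE1]
      by_cases hm : m < g i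
      · rw [if_pos hm]
        constructor
        · intro h; exact absurd h (by decide)
        · intro h; omega
      · rw [if_neg hm]
        constructor
        · intro _; omega
        · intro _; rfl
    show sInf _ = g i
    rw [hset]
    exact csInf_Ici
  -- closedness of the range
  have hRclosed : IsClosed (range e) := by
    apply isClosed_of_closure_subset
    intro f hf
    have happ : ∀ T : Set X, T.Finite → ∃ g, ∀ y ∈ T, (e g).1 y = f.1 y := by
      intro T hT
      have hopen : IsOpen {h : {f0 : X → ZMod 2 // Continuous f0} | ∀ y ∈ T, h.1 y = f.1 y} := by
        have heq : {h : {f0 : X → ZMod 2 // Continuous f0} | ∀ y ∈ T, h.1 y = f.1 y}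
            = ⋂ y ∈ T, (fun h : {f0 : X → ZMod 2 // Continuous f0} => h.1 y) ⁻¹' {f.1 y} := by
          ext h; simp
        rw [heq]
        exact hT.isOpen_biInter fun y _ =>
          (isOpen_discrete _).preimage ((continuous_apply y).comp continuous_subtype_val)
      obtain ⟨h', hO, g, rfl⟩ := mem_closure_iff.mp hf _ hopen (fun y _ => rfl)
      exact ⟨g, fun y hy => hO y hy⟩
    set gg : I → ℕ := fun i => sInf {m | f.1 (xx i m) = 0} with hggdef
    have hfz : ∀ i, f.1 (z i) = 0 := by
      intro i
      obtain ⟨g, hg⟩ := happ {z i} (finite_singleton _)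
      rw [← hg (z i) rfl]
      exact hE2 g i
    have hnonempty : ∀ i, {m | f.1 (xx i m) = 0}.Nonempty := by
      intro i
      have htt : Filter.Tendsto (fun m => f.1 (xx i m)) Filter.atTop (𝓝 (f.1 (z i))) :=
        (f.2.tendsto (z i)).comp (hxtend i)
      rw [hfz i] at htt
      have hev : ∀ᶠ m in Filter.atTop, f.1 (xx i m) ∈ ({0} : Set (ZMod 2)) :=
        htt ((isOpen_discrete _).mem_nhds rfl)
      obtain ⟨m, hm⟩ := hev.exists
      exact ⟨m, hm⟩
    have hglt : ∀ i m, m < gg i → f.1 (xx i m) = 1 := by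
      intro i m hm
      have hnm := Nat.notMem_of_lt_sInf hm
      simp only [mem_setOf_eq] at hnm
      revert hnm
      generalize f.1 (xx i m) = a
      revert a; decide
    have hgeq : ∀ i, f.1 (xx i (gg i)) = 0 := fun i => Nat.sInf_mem (hnonempty i)
    refine ⟨gg, ?_⟩
    apply Subtype.ext
    funext x
    by_cases hx : ∃ i, x ∈ F i
    · obtain ⟨i, hxi⟩ := hx
      obtain ⟨g, hg⟩ := happ (insert x ((fun m => xx i m) '' {m | m ≤ gg i}))
        (((Set.finite_Iic (gg i)).image _).insert x)
      have hva : ∀ m, m ≤ gg i → (e g).1 (xx i m) = f.1 (xx i m) := by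
        intro m hm
        exact hg _ (mem_insert_of_mem _ ⟨m, hm, rfl⟩)
      have hgi : g i = gg i := by
        have h0 : ¬ gg i < g i := by
          intro hlt
          have hcts := hva (gg i) le_rfl
          rw [hE1, if_pos hlt, hgeq i] at hcts
          exact absurd hcts (by decide)
        have h1 : ∀ m, m < gg i → m < g i := by
          intro m hm
          have hcts := hva m (le_of_lt hm)
          rw [hE1, hglt i m hm] at hcts
          by_contra hml
          rw [if_neg hml] at hcts
          exact absurd hcts (by decide)
        rcases lt_trichotomy (g i) (gg i) with h | h | h
        · exact absurd (h1 _ h) (lt_irrefl _)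
        · exact h
        · exact absurd h h0
      have hfx : (e g).1 x = f.1 x := hg x (mem_insert _ _)
      rw [hE4 gg x i hxi, ← hgi, ← hE4 g x i hxi, hfx]
    · push_neg at hx
      obtain ⟨g, hg⟩ := happ {x} (finite_singleton _)
      rw [hE3 gg x hx, ← hE3 g x hx, hg x rfl]
  -- continuity of rho on the range
  have hrhocont : Continuous (fun h : ↥(range e) => rho h.1) := by
    apply continuous_pi
    intro i
    apply continuous_discrete_rng.mpr
    intro n
    have hset : (fun h : ↥(range e) => rho h.1 i) ⁻¹' {n} =
        {h : ↥(range e) | h.1.1 (xx i n) = 0} ∩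
          ⋂ m ∈ Finset.range n, {h : ↥(range e) | h.1.1 (xx i m) = 1} := by
      ext ⟨h, hh⟩
      obtain ⟨g, rfl⟩ := hh
      simp only [mem_preimage, mem_singleton_iff, mem_inter_iff, mem_setOf_eq, mem_iInter,
        Finset.mem_range]
      rw [hRho g i]
      constructor
      · rintro rfl
        refine ⟨?_, fun m hm => ?_⟩
        · show (e g).1 (xx i (g i)) = 0
          rw [hE1]; exact if_neg (lt_irrefl _)
        · show (e g).1 (xx i m) = 1
          rw [hE1]; exact if_pos hm
      · rintro ⟨h0', h1'⟩
        have h0 : (e g).1 (xx i n) = 0 := h0'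
        have h1 : ∀ m, m < n → (e g).1 (xx i m) = 1 := fun m hm => h1' m hm
        rw [hE1] at h0
        have hng : ¬ n < g i := by
          intro hlt
          rw [if_pos hlt] at h0
          exact absurd h0 (by decide)
        have hle : ∀ m, m < n → m < g i := by
          intro m hm
          have hc := h1 m hm
          rw [hE1] at hc
          by_contra hml
          rw [if_neg hml] at hc
          exact absurd hc (by decide)
        rcases lt_trichotomy (g i) n with h | h | h
        · exact absurd (hle _ h) (lt_irrefl _)
        · exact h
        · exact absurd h hng
    rw [hset]
    apply IsOpen.inter
    · show IsOpen ((fun h : ↥(range e) => h.1.1 (xx i n)) ⁻¹' {0})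
      exact (isOpen_discrete _).preimage
        (((continuous_apply _).comp continuous_subtype_val).comp continuous_subtype_val)
    · apply isOpen_biInter_finset
      intro m _
      show IsOpen ((fun h : ↥(range e) => h.1.1 (xx i m)) ⁻¹' {1})
      exact (isOpen_discrete _).preimage
        (((continuous_apply _).comp continuous_subtype_val).comp continuous_subtype_val)
  -- assemble the homeomorphism
  have hre : ∀ h : ↥(range e), e (rho h.1) = h.1 := by
    rintro ⟨h, g, rfl⟩
    rw [show rho (e g) = g from funext (hRho g)]
  let homeo : (I → ℕ) ≃ₜ ↥(range e) :=
    { toFun := fun g => ⟨e g, mem_range_self g⟩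
      invFun := fun h => rho h.1
      left_inv := fun g => funext (hRho g)
      right_inv := fun h => Subtype.ext (hre h)
      continuous_toFun := hecont.subtype_mk _
      continuous_invFun := hrhocont }
  have heeq : e = (Subtype.val : ↥(range e) → _) ∘ homeo := rfl
  rw [heeq]
  exact (hRclosed.isClosedEmbedding_subtypeVal).comp homeo.isClosedEmbedding
end

section
/- Let X be a zero-dimensional metric space. If C_k(X,2) (compact-open topology) is normal, then the derived set X' is separable. -/
/-!
If `X'` is not separable, it contains an uncountable `ε`-separated set `D`. Around each `d ∈ D`,
zero-dimensionality gives a sequence `x d n → d` and pairwise disjoint clopen sets `V d n ∋ x d n`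
inside `ball d (ε / 4)`. Sending `f : D → ℕ` to the indicator of `⋃ d, ⋃ n < f d, V d n` is a closed
embedding of `ℕ^D` into `C_k(X, 2)`: `f d` is read off the values at the points `x d n`, which
together with `d` form a compact set. Hence `ℕ^D` would be normal, contradicting A. H. Stone's
theorem: for uncountable `ι`, the closed sets of `f : ι → ℕ` taking every value except `1`
(resp. `2`) at most once are disjoint but cannot be separated by open sets.
-/

open Topology Set Filter
open scoped NNReal ENNReal

theorem Set.InjOn.exists_extend_of_finite {α : Type*} {s t : Set α} {h : α → ℕ}
    (hh : InjOn h s) (hs : s.Finite) (ht : t.Countable) :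
    ∃ h' : α → ℕ, EqOn h' h s ∧ InjOn h' t := by
  classical
  obtain ⟨e, he⟩ := Set.countable_iff_exists_injOn.1 ht
  obtain ⟨M, hM⟩ := (hs.image h).bddAbove
  have hlt : ∀ i ∈ s, ∀ j, h i < M + 1 + e j := fun i hi j => by
    have := hM (mem_image_of_mem h hi); omega
  refine ⟨s.piecewise h (fun j => M + 1 + e j), fun i hi => Set.piecewise_eq_of_mem _ _ _ hi, ?_⟩
  intro i hi j hj hij
  by_cases his : i ∈ s <;> by_cases hjs : j ∈ s <;>
    simp only [Set.piecewise, his, hjs, ↓reduceIte] at hij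
  · exact hh his hjs hij
  · exact absurd hij (hlt i his j).ne
  · exact absurd hij.symm (hlt j hjs i).ne
  · exact he hi hj (by omega)

theorem isOpen_pi_iff_of_discrete {ι : Type*} {π : ι → Type*} [∀ i, TopologicalSpace (π i)]
    [∀ i, DiscreteTopology (π i)] {s : Set (∀ i, π i)} :
    IsOpen s ↔ ∀ f ∈ s, ∃ I : Finset ι, ∀ g, (∀ i ∈ I, g i = f i) → g ∈ s := by
  rw [isOpen_pi_iff]
  refine forall₂_congr fun f _ => ⟨?_, ?_⟩
  · rintro ⟨I, u, hu, hIu⟩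
    exact ⟨I, fun g hg => hIu fun i hi => hg i hi ▸ (hu i hi).2⟩
  · rintro ⟨I, hI⟩
    exact ⟨I, fun i => {f i}, fun i _ => ⟨isOpen_discrete _, rfl⟩, fun g hg => hI g hg⟩

theorem exists_eqOn_of_monotone {α β : Type*} {G : ℕ → Set α} (hG : Monotone G)
    {h : ℕ → α → β} (hh : ∀ n, EqOn (h (n + 1)) (h n) (G n)) :
    ∃ H : α → β, ∀ n, EqOn H (h n) (G n) := by
  have hstable : ∀ m n, m ≤ n → EqOn (h n) (h m) (G m) := by
    intro m n hmn
    induction n, hmn using Nat.le_induction with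
    | base => exact eqOn_refl _ _
    | succ n hmn ih => exact ((hh n).mono (hG hmn)).trans ih
  classical
  refine ⟨fun a => if ha : ∃ n, a ∈ G n then h ha.choose a else h 0 a, fun n a ha => ?_⟩
  have hex : ∃ n, a ∈ G n := ⟨n, ha⟩
  simp only [dif_pos hex]
  rw [← hstable _ (max hex.choose n) (le_max_left _ _) hex.choose_spec,
    hstable _ _ (le_max_right _ _) ha]

section Stone

variable {ι : Type*}

def injectiveAwayFrom (k : ℕ) : Set (ι → ℕ) := {f | ∀ i j, i ≠ j → f i = f j → f i = k}

theorem isClosed_injectiveAwayFrom (k : ℕ) : IsClosed (injectiveAwayFrom (ι := ι) k) := by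
  simp only [injectiveAwayFrom, ofPred_forall]
  refine isClosed_iInter fun i => isClosed_iInter fun j => isClosed_iInter fun _ => ?_
  show IsClosed ((fun f : ι → ℕ => (f i, f j)) ⁻¹' {p | p.1 = p.2 → p.1 = k})
  exact (isClosed_discrete _).preimage ((continuous_apply i).prodMk (continuous_apply j))

theorem disjoint_injectiveAwayFrom [Uncountable ι] {k l : ℕ} (hkl : k ≠ l) :
    Disjoint (injectiveAwayFrom (ι := ι) k) (injectiveAwayFrom l) := by
  refine disjoint_left.2 fun f hk hl => not_countable (α := ι) ?_
  refine Function.Injective.countable (f := f) fun i j hij => ?_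
  by_contra hne
  exact hkl ((hk i j hne hij).symm.trans (hl i j hne hij))

theorem piecewise_mem_injectiveAwayFrom {S : Set ι} [DecidablePred (· ∈ S)] {h : ι → ℕ}
    (hh : InjOn h S) {k : ℕ} (hk : k < 3) :
    S.piecewise (fun i => h i + 3) (fun _ => k) ∈ injectiveAwayFrom k := by
  intro i j hne hij
  by_cases hi : i ∈ S <;> by_cases hj : j ∈ S <;>
    simp only [Set.piecewise, hi, hj, ↓reduceIte] at hij ⊢
  · exact absurd (hh hi hj (by omega)) hne
  · exact absurd hk (by omega)

open Classical in
/-- Stone's approximants: adding `3` keeps the values away from `1` and `2`, so the limit of the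
`h n`, extended by `2` off `⋃ n, G n`, will lie in `injectiveAwayFrom 2`. -/
theorem exists_seq_of_injectiveAwayFrom_subset {U : Set (ι → ℕ)} (hU : IsOpen U)
    (hAU : injectiveAwayFrom 1 ⊆ U) :
    ∃ (G : ℕ → Finset ι) (h : ℕ → ι → ℕ), Monotone G ∧ (∀ n, InjOn (h n) (G n)) ∧
      (∀ n, EqOn (h (n + 1)) (h n) (G n)) ∧
      ∀ n g, (∀ i ∈ G (n + 1), g i = (G n : Set ι).piecewise (fun i => h n i + 3) 1 i) →
        g ∈ U := by
  have step : ∀ p : Finset ι × (ι → ℕ), ∃ q : Finset ι × (ι → ℕ), InjOn p.2 p.1 →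
      p.1 ⊆ q.1 ∧ InjOn q.2 q.1 ∧ EqOn q.2 p.2 p.1 ∧
      ∀ g, (∀ i ∈ q.1, g i = (p.1 : Set ι).piecewise (fun i => p.2 i + 3) 1 i) → g ∈ U := by
    rintro ⟨G, h⟩
    by_cases hh : InjOn h G
    swap; · exact ⟨(G, h), fun h' => absurd h' hh⟩
    obtain ⟨E, hE⟩ := isOpen_pi_iff_of_discrete.1 hU _
      (hAU (piecewise_mem_injectiveAwayFrom hh (by norm_num)))
    obtain ⟨h', hh'G, hh'⟩ := hh.exists_extend_of_finite G.finite_toSet (G ∪ E).countable_toSet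
    exact ⟨(G ∪ E, h'), fun _ => ⟨Finset.subset_union_left, hh', hh'G,
      fun g hg => hE g fun i hi => hg i (Finset.mem_union_right G hi)⟩⟩
  choose next hnext using step
  set p : ℕ → Finset ι × (ι → ℕ) := fun n => next^[n] (∅, 0)
  have hp : ∀ n, p (n + 1) = next (p n) := fun n => Function.iterate_succ_apply' next n _
  have hinj : ∀ n, InjOn (p n).2 (p n).1 := by
    intro n
    induction n with
    | zero => simp [p]
    | succ n ih => rw [hp]; exact (hnext _ ih).2.1
  refine ⟨fun n => (p n).1, fun n => (p n).2, monotone_nat_of_le_succ fun n => ?_, hinj,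
    fun n => ?_, fun n => ?_⟩
  · simpa only [hp] using (hnext _ (hinj n)).1
  · simpa only [hp] using (hnext _ (hinj n)).2.2.1
  · simpa only [hp] using (hnext _ (hinj n)).2.2.2

theorem not_separatedNhds_injectiveAwayFrom :
    ¬ SeparatedNhds (injectiveAwayFrom (ι := ι) 1) (injectiveAwayFrom 2) := by
  classical
  rintro ⟨U, V, hU, hV, hAU, hAV, hUV⟩
  obtain ⟨G, h, hG, hinj, hh, hGU⟩ := exists_seq_of_injectiveAwayFrom_subset hU hAU
  have hG' : Monotone fun n => (G n : Set ι) := fun m n hmn => Finset.coe_subset.2 (hG hmn)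
  obtain ⟨H, hH⟩ := exists_eqOn_of_monotone hG' hh
  set S := ⋃ n, (G n : Set ι)
  set g := S.piecewise (fun i => H i + 3) (fun _ => 2)
  have hHinj : InjOn H S :=
    inj_on_iUnion_of_directed hG'.directed_le fun n => (hinj n).congr (hH n).symm
  obtain ⟨E, hEV⟩ := isOpen_pi_iff_of_discrete.1 hV g
    (hAV (piecewise_mem_injectiveAwayFrom hHinj (by norm_num)))
  obtain ⟨k, hk⟩ := hG'.directed_le.exists_mem_subset_of_finset_subset_biUnion
    (s := E.filter (· ∈ S)) fun i hi => (Finset.mem_filter.1 hi).2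
  -- `f` agrees with the `k`-th approximant on `G (k + 1)`, and with `g` on `E`, since `E` meets
  -- `S` only inside `G k`.
  set f := (G (k + 1) : Set ι).piecewise ((G k : Set ι).piecewise (fun i => h k i + 3) 1) g
  have hfU : f ∈ U := hGU k f fun i hi => Set.piecewise_eq_of_mem _ _ _ hi
  have hfV : f ∈ V := hEV f fun i hi => by
    by_cases hik : i ∈ G (k + 1)
    · have hiG : i ∈ G k := hk (Finset.mem_filter.2 ⟨hi, mem_iUnion.2 ⟨k + 1, hik⟩⟩)
      simp only [f, g]
      rw [Set.piecewise_eq_of_mem _ _ _ (Finset.mem_coe.2 hik),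
        Set.piecewise_eq_of_mem _ _ _ (Finset.mem_coe.2 hiG),
        Set.piecewise_eq_of_mem _ _ _ (mem_iUnion.2 ⟨k, hiG⟩), hH k hiG]
    · simp [f, hik]
  exact disjoint_left.1 hUV hfU hfV

theorem not_normalSpace_pi_nat [Uncountable ι] : ¬ NormalSpace (ι → ℕ) := fun _ =>
  not_separatedNhds_injectiveAwayFrom (ι := ι) <| normal_separation (isClosed_injectiveAwayFrom 1)
    (isClosed_injectiveAwayFrom 2) (disjoint_injectiveAwayFrom (by norm_num))

end Stone

namespace ContinuousMap

variable {X Y : Type*} [TopologicalSpace X] [TopologicalSpace Y] [DiscreteTopology Y]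

theorem isOpen_setOf_eqOn_s12 {K : Set X} (hK : IsCompact K) (g : C(X, Y)) :
    IsOpen {h : C(X, Y) | EqOn h g K} := by
  have : {h : C(X, Y) | EqOn h g K} =
      ⋂ y ∈ g '' K, {h : C(X, Y) | MapsTo h (K ∩ g ⁻¹' {y}) {y}} := by
    ext h
    simp only [mem_ofPred_eq, mem_iInter, mem_image, forall_exists_index, and_imp,
      forall_apply_eq_imp_iff₂, MapsTo, mem_inter_iff, mem_preimage, mem_singleton_iff]
    exact ⟨fun hh y hy x hx hxy => hxy ▸ hh hx, fun hh x hx => hh x hx hx rfl⟩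
  rw [this]
  exact (hK.image g.continuous).finite_of_discrete.isOpen_biInter fun y _ =>
    isOpen_setOfPred_mapsTo (hK.inter_right ((isClosed_discrete _).preimage g.continuous))
      (isOpen_discrete _)

theorem continuous_of_eqOn_imp_eq {Z : Type*} [TopologicalSpace Z] {K : Set X} (hK : IsCompact K)
    {Φ : C(X, Y) → Z} (hΦ : ∀ g h : C(X, Y), EqOn g h K → Φ g = Φ h) : Continuous Φ :=
  IsLocallyConstant.continuous <| (IsLocallyConstant.iff_eventually_eq Φ).2 fun g =>
    eventually_of_mem ((isOpen_setOf_eqOn_s12 hK g).mem_nhds fun _ _ => rfl) fun h hh => hΦ h g hh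

end ContinuousMap

structure ClopenFans (ι X : Type*) [TopologicalSpace X] where
  point : ι → ℕ → X
  piece : ι → ℕ → Set X
  isClopen_piece (i : ι) (n : ℕ) : IsClopen (piece i n)
  point_mem_piece (i : ι) (n : ℕ) : point i n ∈ piece i n
  pairwise_disjoint : Pairwise fun p q : ι × ℕ => Disjoint (piece p.1 p.2) (piece q.1 q.2)
  locallyFinite : LocallyFinite fun i => ⋃ n, piece i n
  exists_tendsto (i : ι) : ∃ c, Tendsto (point i) atTop (𝓝 c)

namespace ClopenFans

variable {ι X Y : Type*} [TopologicalSpace X] (F : ClopenFans ι X)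

def support (f : ι → ℕ) : Set X := ⋃ i, ⋃ n ∈ Iio (f i), F.piece i n

theorem isClopen_support (f : ι → ℕ) : IsClopen (F.support f) :=
  ⟨F.locallyFinite.subset (fun i => iUnion₂_subset fun n _ => subset_iUnion (F.piece i) n)
    |>.isClosed_iUnion fun i => (finite_Iio _).isClosed_biUnion fun n _ => (F.isClopen_piece i n).1,
   isOpen_iUnion fun i => isOpen_biUnion fun n _ => (F.isClopen_piece i n).2⟩

theorem point_mem_support_iff {f : ι → ℕ} {i : ι} {n : ℕ} :
    F.point i n ∈ F.support f ↔ n < f i := by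
  simp only [support, mem_iUnion, mem_Iio, exists_prop]
  refine ⟨fun ⟨j, m, hm, hj⟩ => ?_, fun h => ⟨i, n, h, F.point_mem_piece i n⟩⟩
  have : (i, n) = (j, m) := by
    by_contra hne
    exact F.pairwise_disjoint hne |>.ne_of_mem (F.point_mem_piece i n) hj rfl
  obtain ⟨rfl, rfl⟩ := Prod.ext_iff.1 this
  exact hm

theorem mem_support_congr {f g : ι → ℕ} {x : X} (hfg : ∀ i, x ∈ ⋃ n, F.piece i n → f i = g i) :
    x ∈ F.support f ↔ x ∈ F.support g := by
  simp only [support, mem_iUnion, mem_Iio, exists_prop]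
  refine exists_congr fun i => ⟨?_, ?_⟩ <;> rintro ⟨n, hn, hx⟩
  · exact ⟨n, hfg i (mem_iUnion.2 ⟨n, hx⟩) ▸ hn, hx⟩
  · exact ⟨n, (hfg i (mem_iUnion.2 ⟨n, hx⟩)).symm ▸ hn, hx⟩

variable [TopologicalSpace Y] [Zero Y]

noncomputable def decode (g : C(X, Y)) (i : ι) : ℕ := sInf {n | g (F.point i n) = 0}

theorem continuous_decode [DiscreteTopology Y] : Continuous (F.decode (Y := Y)) := by
  refine continuous_pi fun i => ?_
  obtain ⟨c, hc⟩ := F.exists_tendsto i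
  refine ContinuousMap.continuous_of_eqOn_imp_eq hc.isCompact_insert_range fun g h hgh => ?_
  have : ∀ n, g (F.point i n) = h (F.point i n) := fun n => hgh (mem_insert_of_mem _ ⟨n, rfl⟩)
  simp only [decode, this]

variable [One Y]

noncomputable def indicator (f : ι → ℕ) : C(X, Y) :=
  ⟨(F.support f).indicator 1,
    continuous_const.indicator fun x hx => by simp [(F.isClopen_support f).frontier_eq] at hx⟩

theorem continuous_indicator : Continuous (F.indicator (Y := Y)) := by
  refine ContinuousMap.continuous_compactOpen.2 fun K hK U _ => isOpen_pi_iff_of_discrete.2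
    fun f hf => ⟨(F.locallyFinite.finite_nonempty_inter_compact hK).toFinset,
      fun g hg => hf.congr fun x hx => ?_⟩
  have : x ∈ F.support f ↔ x ∈ F.support g := F.mem_support_congr fun i hi =>
    (hg i ((Finite.mem_toFinset _).2 ⟨x, hi, hx⟩)).symm
  exact Set.indicator_eq_indicator this rfl

variable [NeZero (1 : Y)]

theorem indicator_point_eq_zero_iff {f : ι → ℕ} {i : ι} {n : ℕ} :
    F.indicator f (F.point i n) = (0 : Y) ↔ f i ≤ n := by
  simp [indicator, Set.indicator_apply_eq_zero, F.point_mem_support_iff]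

theorem leftInverse_decode : Function.LeftInverse F.decode (F.indicator (Y := Y)) := fun f => by
  funext i
  simp only [decode, F.indicator_point_eq_zero_iff]
  exact csInf_Ici

theorem isClosedEmbedding_indicator [DiscreteTopology Y] :
    IsClosedEmbedding (F.indicator (Y := Y)) :=
  F.leftInverse_decode.isClosedEmbedding F.continuous_decode F.continuous_indicator

end ClopenFans

section Metric

open Metric

variable {X : Type*}

theorem Metric.exists_maximal_isSeparated [PseudoEMetricSpace X] (ε : ℝ≥0∞) (s : Set X) :
    ∃ N, Maximal (fun N => N ⊆ s ∧ IsSeparated ε N) N :=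
  zorn_subset _ fun c hcs hc => ⟨⋃₀ c, ⟨sUnion_subset fun _ hN => (hcs hN).1,
    (pairwise_sUnion hc.directedOn).2 fun _ hN => (hcs hN).2⟩, fun _ => subset_sUnion_of_mem⟩

theorem isSeparable_of_forall_isSeparated_countable [PseudoEMetricSpace X] {s : Set X}
    (h : ∀ ε : ℝ≥0, ε ≠ 0 → ∀ N ⊆ s, IsSeparated ε N → N.Countable) :
    TopologicalSpace.IsSeparable s := by
  obtain ⟨t, -, htc, hst⟩ := EMetric.subset_countable_closure_of_almost_dense_set s fun δ hδ => by
    obtain ⟨ε, hε, hεδ⟩ := ENNReal.lt_iff_exists_nnreal_btwn.1 hδ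
    obtain ⟨N, hN⟩ := exists_maximal_isSeparated (ε : ℝ≥0∞) s
    exact ⟨N, h ε (ENNReal.coe_pos.1 hε).ne' N hN.prop.1 hN.prop.2,
      (isCover_iff_subset_iUnion_closedEBall.1 (IsCover.of_maximal_isSeparated hN)).trans
        (iUnion₂_mono fun _ _ => closedEBall_subset_closedEBall hεδ.le)⟩
  exact ⟨t, htc, hst⟩

variable [PseudoMetricSpace X] {ε : ℝ≥0} {D : Set X}

theorem Metric.IsSeparated.lt_dist (hD : IsSeparated ε D) {x y : X} (hx : x ∈ D) (hy : y ∈ D)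
    (hxy : x ≠ y) : (ε : ℝ) < dist x y := by
  have : (ε : ℝ≥0∞) < edist x y := hD hx hy hxy
  rwa [edist_nndist, ENNReal.coe_lt_coe, ← NNReal.coe_lt_coe, coe_nndist] at this

theorem Metric.IsSeparated.pairwise_disjoint_ball (hD : IsSeparated ε D) :
    Pairwise fun d d' : D => Disjoint (ball (d : X) (ε / 4)) (ball (d' : X) (ε / 4)) :=
  fun d d' hdd' => ball_disjoint_ball <| by
    linarith [hD.lt_dist d.2 d'.2 (Subtype.coe_injective.ne hdd'), ε.coe_nonneg]

theorem Metric.IsSeparated.locallyFinite_ball (hε : ε ≠ 0) (hD : IsSeparated ε D) :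
    LocallyFinite fun d : D => ball (d : X) (ε / 4) := by
  have hε' : (0 : ℝ) < ε / 4 := by positivity
  refine fun y => ⟨ball y (ε / 4), ball_mem_nhds y hε', Subsingleton.finite ?_⟩
  rintro d ⟨z, hzd, hzy⟩ d' ⟨z', hz'd, hz'y⟩
  by_contra hne
  have := hD.lt_dist d.2 d'.2 (Subtype.coe_injective.ne hne)
  rw [mem_ball] at hzd hzy hz'd hz'y
  linarith [dist_triangle4 (d : X) z z' d', dist_triangle z y z', dist_comm (d : X) z,
    dist_comm z' y]

theorem exists_clopen_fan {X : Type*} [MetricSpace X]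
    (hzd : TopologicalSpace.IsTopologicalBasis {s : Set X | IsClopen s}) {d : X}
    (hd : (𝓝[≠] d).NeBot) {r : ℝ} (hr : 0 < r) :
    ∃ (x : ℕ → X) (V : ℕ → Set X), Tendsto x atTop (𝓝 d) ∧ (∀ n, IsClopen (V n)) ∧
      (∀ n, x n ∈ V n) ∧ (∀ n, V n ⊆ ball d r) ∧ Pairwise fun m n => Disjoint (V m) (V n) := by
  have hnext : ∀ s : Finset X, (∀ y ∈ s, y ≠ d ∧ dist y d < r / 2) →
      ∃ z, (z ≠ d ∧ dist z d < r / 2) ∧ ∀ y ∈ s, dist z d < dist y d / 4 := by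
    intro s hs
    have hnear : ∀ c > 0, ∀ᶠ z in 𝓝[≠] d, dist z d < c := fun c hc =>
      mem_nhdsWithin_of_mem_nhds (ball_mem_nhds d hc)
    have hfar : ∀ᶠ z in 𝓝[≠] d, ∀ y ∈ s, dist z d < dist y d / 4 := s.eventually_all.2
      fun y hy => hnear _ (by linarith [dist_pos.2 (hs y hy).1])
    obtain ⟨z, hzd, hzr, hzs⟩ :=
      (eventually_mem_nhdsWithin.and ((hnear _ (half_pos hr)).and hfar)).exists
    exact ⟨z, ⟨hzd, hzr⟩, hzs⟩
  obtain ⟨x, hx, hxx⟩ := exists_seq_of_forall_finset_exists _ _ hnext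
  have hgeo : ∀ n, dist (x n) d ≤ r / 2 * (1 / 4) ^ n := by
    intro n
    induction n with
    | zero => simpa using (hx 0).2.le
    | succ n ih => rw [pow_succ]; linarith [hxx n (n + 1) (lt_add_one n)]
  have htend : Tendsto x atTop (𝓝 d) := tendsto_iff_dist_tendsto_zero.2 <|
    squeeze_zero (fun _ => dist_nonneg) hgeo <| by
      simpa using (tendsto_pow_atTop_nhds_zero_of_lt_one (r := (1 / 4 : ℝ)) (by norm_num)
        (by norm_num)).const_mul (r / 2)
  choose V hVc hxV hVx using fun n => hzd.exists_subset_of_mem_open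
    (mem_ball_self (half_pos (dist_pos.2 (hx n).1))) isOpen_ball
  refine ⟨x, V, htend, hVc, hxV, fun n y hy => ?_, (pairwise_disjoint_on V).2 fun m n hmn => ?_⟩
  · have := mem_ball.1 (hVx n hy)
    rw [mem_ball]
    linarith [dist_triangle y (x n) d, (hx n).2]
  · refine disjoint_left.2 fun y hym hyn => ?_
    have := mem_ball.1 (hVx m hym)
    have := mem_ball.1 (hVx n hyn)
    linarith [hxx m n hmn, dist_triangle (x m) y d, dist_triangle y (x n) d, dist_comm (x m) y,
      dist_nonneg (x := x m) (y := d)]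

theorem exists_clopenFans {X : Type*} [MetricSpace X]
    (hzd : TopologicalSpace.IsTopologicalBasis {s : Set X | IsClopen s}) {ε : ℝ≥0} (hε : ε ≠ 0)
    {D : Set X} (hD : IsSeparated ε D) (hD' : ∀ d ∈ D, (𝓝[≠] d).NeBot) :
    Nonempty (ClopenFans D X) := by
  choose x V hx hVc hxV hVball hVdisj using fun d : D =>
    exists_clopen_fan hzd (hD' d d.2) (r := ε / 4) (by positivity)
  refine ⟨⟨x, V, hVc, hxV, ?_, (hD.locallyFinite_ball hε).subset fun d => iUnion_subset (hVball d),
    fun d => ⟨d, hx d⟩⟩⟩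
  rintro ⟨d, m⟩ ⟨d', n⟩ hne
  rcases eq_or_ne d d' with rfl | hdd'
  · exact hVdisj d fun hmn => hne (Prod.ext rfl hmn)
  · exact (hD.pairwise_disjoint_ball hdd').mono (hVball d m) (hVball d' n)

end Metric

/-- If `X` is a zero-dimensional metric space such that `C_k(X, 2)` (the
continuous `ℤ/2`-valued functions with the compact-open topology) is normal, then the derived
set of `X` (the set of non-isolated points) is separable. -/
theorem statement12 {X : Type*} [MetricSpace X]
    (hzd : TopologicalSpace.IsTopologicalBasis {s : Set X | IsClopen s})
    (hn : NormalSpace C(X, ZMod 2)) :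
    TopologicalSpace.IsSeparable {x : X | (𝓝[≠] x).NeBot} := by
  by_contra hns
  obtain ⟨ε, hε, D, hDX, hD, hDc⟩ : ∃ ε : ℝ≥0, ε ≠ 0 ∧
      ∃ D ⊆ {x : X | (𝓝[≠] x).NeBot}, Metric.IsSeparated ε D ∧ ¬ D.Countable := by
    by_contra! h
    exact hns (isSeparable_of_forall_isSeparated_countable h)
  have : Uncountable D := not_countable_iff.1 (Set.countable_coe_iff.not.2 hDc)
  obtain ⟨F⟩ := exists_clopenFans hzd hε hD fun d hd => hDX hd
  exact not_normalSpace_pi_nat (ι := D) (F.isClosedEmbedding_indicator (Y := ZMod 2)).normalSpace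
end

section
/- The product space ℕ^{ω₁} (the product of uncountably many copies of the countable discrete space ℕ) is not a normal topological space. -/
/-!
Stone's sets `A m = injOffFiber ι m` are closed, and `A 0`, `A 1` are disjoint since an injection
`ι → ℕ` would make `ι` countable. Given open sets `U ⊇ A 0` and `V ⊇ A 1`, build finitely supported
`x₀, x₁, … ∈ A 0`, each extending the previous one, such that the cylinder of `x k` over
`support (x (k + 1))` lies in `U`. Their limit, set to `1` off the countable union of the supports,
lies in `A 1`. A cylinder around it inside `V` involves finitely many coordinates, all already
decided by some `x K`; the point agreeing with `x K` on `support (x (K + 1))` and with the limit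
elsewhere then lies in both `U` and `V`.
-/

open Set Function Filter

namespace StoneProduct

variable {ι : Type*}

def injOffFiber (ι : Type*) (m : ℕ) : Set (ι → ℕ) :=
  {f | InjOn f {i | f i ≠ m}}

theorem isClosed_injOffFiber (m : ℕ) : IsClosed (injOffFiber ι m) := by
  have : injOffFiber ι m = ⋂ (s : ι) (t : ι),
      (fun f : ι → ℕ => (f s, f t)) ⁻¹' {p | p.1 ≠ m → p.1 = p.2 → s = t} := by
    ext f
    simp only [injOffFiber, InjOn, mem_ofPred_eq, mem_iInter, mem_preimage]
    exact ⟨fun h s t hs hst => h hs (hst ▸ hs) hst, fun h s hs t _ hst => h s t hs hst⟩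
  rw [this]
  exact isClosed_iInter fun s => isClosed_iInter fun t =>
    (isClosed_discrete _).preimage (by fun_prop)

theorem disjoint_injOffFiber [Uncountable ι] {m n : ℕ} (hmn : m ≠ n) :
    Disjoint (injOffFiber ι m) (injOffFiber ι n) := by
  refine disjoint_left.mpr fun f hm hn => not_countable (α := ι) (Injective.countable (f := f) ?_)
  intro s t hst
  by_cases hs : f s = m
  · exact hn (show f s ≠ n by omega) (show f t ≠ n by omega) hst
  · exact hm hs (show f t ≠ m by omega) hst

theorem exists_cylinder_subset_of_isOpen {X : ι → Type*} [∀ i, TopologicalSpace (X i)]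
    {U : Set (∀ i, X i)} (hU : IsOpen U) {f : ∀ i, X i} (hf : f ∈ U) :
    ∃ I : Finset ι, {g | ∀ i ∈ I, g i = f i} ⊆ U := by
  obtain ⟨I, u, hu, hIU⟩ := isOpen_pi_iff.mp hU f hf
  exact ⟨I, fun g hg => hIU fun i hi => hg i hi ▸ (hu i hi).2⟩

def Extends (x y : ι → ℕ) : Prop :=
  EqOn y x (support x)

theorem Extends.refl (x : ι → ℕ) : Extends x x := fun _ _ => rfl

theorem Extends.trans {x y z : ι → ℕ} (hxy : Extends x y) (hyz : Extends y z) :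
    Extends x z := fun i hi =>
  (hyz (show y i ≠ 0 from hxy hi ▸ hi)).trans (hxy hi)

theorem Extends.support_subset {x y : ι → ℕ} (h : Extends x y) : support x ⊆ support y :=
  fun i hi => show y i ≠ 0 from h hi ▸ hi

def finSuppInj (ι : Type*) : Set (ι → ℕ) :=
  {x | x ∈ injOffFiber ι 0 ∧ (support x).Finite}

theorem exists_extends_mem_support {x : ι → ℕ} (hx : x ∈ finSuppInj ι) (a : ι) :
    ∃ x' ∈ finSuppInj ι, Extends x x' ∧ a ∈ support x' := by
  classical
  by_cases ha : a ∈ support x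
  · exact ⟨x, hx, Extends.refl x, ha⟩
  obtain ⟨N, hN⟩ := ((hx.2.image x).insert 0).exists_notMem
  obtain ⟨hN0, hNx⟩ : N ≠ 0 ∧ N ∉ x '' support x := by simpa [not_or] using hN
  have hsupp : support (update x a N) = insert a (support x) :=
    support_update_of_ne_zero x a hN0
  have hagree : EqOn (update x a N) x (support x) := fun i hi =>
    update_of_ne (ne_of_mem_of_not_mem hi ha) _ _
  refine ⟨update x a N, ⟨?_, hsupp ▸ hx.2.insert a⟩, hagree, hsupp ▸ mem_insert a _⟩
  change InjOn _ (support _)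
  rw [hsupp, injOn_insert ha, hagree.image_eq, update_self]
  exact ⟨hx.1.congr hagree.symm, hNx⟩

theorem exists_extends_subset_support {x : ι → ℕ} (hx : x ∈ finSuppInj ι) {s : Set ι}
    (hs : s.Finite) : ∃ x' ∈ finSuppInj ι, Extends x x' ∧ s ⊆ support x' := by
  induction s, hs using Set.Finite.induction_on with
  | empty => exact ⟨x, hx, Extends.refl x, empty_subset _⟩
  | @insert a s _ _ ih =>
    obtain ⟨y, hy, hxy, hsy⟩ := ih
    obtain ⟨z, hz, hyz, haz⟩ := exists_extends_mem_support hy a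
    exact ⟨z, hz, hxy.trans hyz, insert_subset haz (hsy.trans hyz.support_subset)⟩

theorem zero_mem_finSuppInj : (0 : ι → ℕ) ∈ finSuppInj ι := by
  refine ⟨?_, ?_⟩ <;> simp [injOffFiber]

theorem exists_seq_extends_eqOn_subset {U : Set (ι → ℕ)} (hU : IsOpen U)
    (hAU : injOffFiber ι 0 ⊆ U) :
    ∃ x : ℕ → ι → ℕ, ∀ k, x k ∈ injOffFiber ι 0 ∧ Extends (x k) (x (k + 1)) ∧
      {g | EqOn g (x k) (support (x (k + 1)))} ⊆ U := by
  have hstep : ∀ x ∈ finSuppInj ι, ∃ x' ∈ finSuppInj ι, Extends x x' ∧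
      {g | EqOn g x (support x')} ⊆ U := by
    intro x hx
    obtain ⟨I, hI⟩ := exists_cylinder_subset_of_isOpen hU (hAU hx.1)
    obtain ⟨x', hx', hxx', hIx'⟩ := exists_extends_subset_support hx I.finite_toSet
    exact ⟨x', hx', hxx', fun g hg => hI fun i hi => hg (hIx' hi)⟩
  choose! next hnext using hstep
  have hmem : ∀ k, next^[k] 0 ∈ finSuppInj ι := fun k => by
    induction k with
    | zero => exact zero_mem_finSuppInj
    | succ k ih => exact iterate_succ_apply' next k 0 ▸ (hnext _ ih).1
  refine ⟨fun k => next^[k] 0, fun k => ⟨(hmem k).1, ?_⟩⟩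
  simp only [iterate_succ_apply']
  exact (hnext _ (hmem k)).2

theorem Extends.of_le {x : ℕ → ι → ℕ} (hx : ∀ k, Extends (x k) (x (k + 1))) {k m : ℕ}
    (hkm : k ≤ m) : Extends (x k) (x m) := by
  induction m, hkm using Nat.le_induction with
  | base => exact Extends.refl _
  | succ m _ ih => exact ih.trans (hx m)

open Classical in
noncomputable def limit (x : ℕ → ι → ℕ) : ι → ℕ :=
  fun i => if h : ∃ k, x k i ≠ 0 then x (Nat.find h) i else 1

theorem limit_eq_of_ne_zero {x : ℕ → ι → ℕ} (hx : ∀ k, Extends (x k) (x (k + 1))) {k : ℕ}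
    {i : ι} (hi : x k i ≠ 0) : limit x i = x k i := by
  have h : ∃ k, x k i ≠ 0 := ⟨k, hi⟩
  rw [limit, dif_pos h]
  exact (Extends.of_le hx (Nat.find_min' h hi) (Nat.find_spec h)).symm

theorem exists_ne_zero_of_limit_ne_one {x : ℕ → ι → ℕ} {i : ι} (hi : limit x i ≠ 1) :
    ∃ k, x k i ≠ 0 := by
  by_contra h
  exact hi (by rw [limit, dif_neg h])

theorem limit_mem_injOffFiber_one {x : ℕ → ι → ℕ} (hx : ∀ k, Extends (x k) (x (k + 1)))
    (hinj : ∀ k, x k ∈ injOffFiber ι 0) : limit x ∈ injOffFiber ι 1 := by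
  intro a ha b hb hab
  obtain ⟨k, hk⟩ := exists_ne_zero_of_limit_ne_one ha
  obtain ⟨m, hm⟩ := exists_ne_zero_of_limit_ne_one hb
  have hak : x (max k m) a ≠ 0 := (Extends.of_le hx (le_max_left k m)).support_subset hk
  have hbm : x (max k m) b ≠ 0 := (Extends.of_le hx (le_max_right k m)).support_subset hm
  refine hinj (max k m) hak hbm ?_
  rwa [← limit_eq_of_ne_zero hx hak, ← limit_eq_of_ne_zero hx hbm]

theorem not_normalSpace_pi_nat [Uncountable ι] : ¬ NormalSpace (ι → ℕ) := by
  intro hN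
  obtain ⟨U, V, hU, hV, hAU, hAV, hUV⟩ := hN.normal _ _ (isClosed_injOffFiber 0)
    (isClosed_injOffFiber 1) (disjoint_injOffFiber zero_ne_one)
  obtain ⟨x, hx⟩ := exists_seq_extends_eqOn_subset hU hAU
  have hext : ∀ k, Extends (x k) (x (k + 1)) := fun k => (hx k).2.1
  obtain ⟨E, hE⟩ := exists_cylinder_subset_of_isOpen hV
    (hAV (limit_mem_injOffFiber_one hext fun k => (hx k).1))
  obtain ⟨K, hK⟩ : ∃ K, ∀ i ∈ E, (∃ k, x k i ≠ 0) → x K i ≠ 0 := by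
    refine ((eventually_all_finset (l := atTop) E).2 fun i _ => ?_).exists
    by_cases h : ∃ k, x k i ≠ 0
    · obtain ⟨k, hk⟩ := h
      exact eventually_atTop.2 ⟨k, fun m hm _ => (Extends.of_le hext hm).support_subset hk⟩
    · exact Eventually.of_forall fun _ h' => absurd h' h
  let z : ι → ℕ := fun i => if x (K + 1) i ≠ 0 then x K i else limit x i
  have hzU : z ∈ U := (hx K).2.2 fun i hi => if_pos hi
  have hzV : z ∈ V := hE fun i hi => by
    by_cases h : x (K + 1) i ≠ 0
    · simp only [z, if_pos h]
      exact (limit_eq_of_ne_zero hext (hK i hi ⟨_, h⟩)).symm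
    · exact if_neg h
  exact disjoint_left.mp hUV hzU hzV

end StoneProduct

/-- A. H. Stone: The product `ℕ^{ω₁}` of uncountably many (here: `ω₁` many)
copies of the countable discrete space `ℕ` is not normal. -/
theorem statement13 : ¬ NormalSpace ((Cardinal.aleph 1).out → ℕ) := by
  have : Uncountable (Cardinal.aleph 1).out := by
    rw [← Cardinal.aleph0_lt_mk_iff, Cardinal.mk_out]
    exact Cardinal.aleph0_lt_aleph_one
  exact StoneProduct.not_normalSpace_pi_nat
end

section
/- Let X be a zero-dimensional metric space. If X is not separable, then there exists an embedding of the compact group (ℤ/2)^{ω₁} into C_k(X, 2) (compact-open topology) as a topological subgroup, and consequently C_k(X,2) does not have countable tightness. -/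
/-!
A non-separable metric space contains, for some `ε > 0`, an uncountable `ε`-separated set, hence
an `ω₁`-indexed one `(xᵢ)`. Clopen neighbourhoods `Aᵢ ⊆ ball xᵢ (ε / 4)` form a locally finite,
pairwise disjoint family, so `z ↦ ∑ᵢ zᵢ • 𝟙_{Aᵢ}` is a continuous additive map
`(ℤ/2)^{ω₁} → C(X, ℤ/2)`; evaluation at the `xᵢ` is a continuous left inverse, so it is an
embedding. Countable tightness passes to subspaces but fails for an uncountable power: the
constant `1` lies in the closure of the finitely supported functions, while countably many of
those all vanish at a common coordinate.
-/

open Topology Set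

/-- A topological space has countable tightness if every point in the closure of a set lies
in the closure of a countable subset. -/
def CountableTightness (Y : Type*) [TopologicalSpace Y] : Prop :=
  ∀ (A : Set Y) (y : Y), y ∈ closure A → ∃ B ⊆ A, B.Countable ∧ y ∈ closure B

open Function Filter TopologicalSpace Metric
open scoped NNReal ENNReal

theorem Topology.IsEmbedding.countableTightness {Y Z : Type*} [TopologicalSpace Y]
    [TopologicalSpace Z] {f : Y → Z} (hf : IsEmbedding f) (h : CountableTightness Z) :
    CountableTightness Y := by
  intro A y hy
  obtain ⟨B, hBA, hBc, hyB⟩ := h (f '' A) (f y) (mem_closure_image hf.continuous.continuousAt hy)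
  refine ⟨A ∩ f ⁻¹' B, inter_subset_left, (hBc.preimage hf.injective).mono inter_subset_right, ?_⟩
  rwa [hf.closure_eq_preimage_closure_image, mem_preimage, image_inter_preimage,
    inter_eq_right.2 hBA]

section Pi
variable {ι M : Type*} [TopologicalSpace M]

theorem mem_closure_setOf_support_finite [Zero M] (w : ι → M) :
    w ∈ closure {z : ι → M | (support z).Finite} := by
  refine mem_closure_of_tendsto (f := fun s : Finset ι => (s : Set ι).indicator w) (b := atTop)
    (tendsto_pi_nhds.2 fun i => tendsto_atTop_of_eventually_const (i₀ := {i}) fun s hs => ?_)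
    (Eventually.of_forall fun s => s.finite_toSet.subset support_indicator_subset)
  exact indicator_of_mem (Finset.singleton_subset_iff.1 hs) w

theorem not_countableTightness_pi [T1Space M] [Nontrivial M] [Uncountable ι] :
    ¬ CountableTightness (ι → M) := by
  intro h
  obtain ⟨a, m, hm⟩ := exists_pair_ne M
  let _ : Zero M := ⟨a⟩
  obtain ⟨B, hB, hBc, hmB⟩ := h _ _ (mem_closure_setOf_support_finite fun _ : ι => m)
  have hsupp : (⋃ z ∈ B, support z).Countable := hBc.biUnion fun z hz => (hB hz).countable
  obtain ⟨j, hj⟩ : ∃ j, j ∉ ⋃ z ∈ B, support z :=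
    ne_univ_iff_exists_notMem _ |>.1 fun h => not_countable_univ (h ▸ hsupp)
  have hB0 : B ⊆ {z | z j = 0} := fun z hz =>
    notMem_support.1 fun hzj => hj (mem_biUnion hz hzj)
  exact hm.symm (closure_minimal hB0 (isClosed_singleton.preimage (continuous_apply j)) hmB)

end Pi

theorem Metric.exists_isSeparated_not_countable {X : Type*} [PseudoEMetricSpace X]
    (hX : ¬ SeparableSpace X) :
    ∃ ε : ℝ≥0, ε ≠ 0 ∧ ∃ S : Set X, IsSeparated ε S ∧ ¬ S.Countable := by
  contrapose! hX
  suffices SecondCountableTopology X by infer_instance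
  refine EMetric.secondCountable_of_almost_dense_set fun ε hε => ?_
  obtain ⟨δ, hδ, hδε⟩ := ENNReal.lt_iff_exists_nnreal_btwn.1 hε
  obtain ⟨N, hN⟩ := zorn_subset {N : Set X | IsSeparated δ N} fun c hc hchain =>
    ⟨⋃₀ c, (pairwise_sUnion hchain.directedOn).2 hc, fun _ => subset_sUnion_of_mem⟩
  have hcover : IsCover δ univ N := .of_maximal_isSeparated (by simpa using hN)
  refine ⟨N, hX δ (mod_cast hδ.ne') N hN.prop, univ_subset_iff.1 ?_⟩
  exact (isCover_iff_subset_iUnion_closedEBall.1 hcover).trans <|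
    iUnion₂_mono fun _ _ => closedEBall_subset_closedEBall hδε.le

theorem Metric.IsSeparated.coe_lt_dist {X : Type*} [PseudoMetricSpace X] {ε : ℝ≥0} {S : Set X}
    (hS : IsSeparated ε S) {a b : X} (ha : a ∈ S) (hb : b ∈ S) (hab : a ≠ b) :
    (ε : ℝ) < dist a b := by
  have : (ε : ℝ≥0∞) < edist a b := hS ha hb hab
  rwa [edist_nndist, ENNReal.coe_lt_coe, ← NNReal.coe_lt_coe, coe_nndist] at this

theorem Pairwise.locallyFinite_ball {X ι : Type*} [PseudoMetricSpace X] {x : ι → X} {ε : ℝ}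
    (hε : 0 < ε) (hx : Pairwise fun i j => ε ≤ dist (x i) (x j)) :
    LocallyFinite fun i => ball (x i) (ε / 4) := by
  refine fun y => ⟨ball y (ε / 4), ball_mem_nhds y (by positivity), Subsingleton.finite ?_⟩
  rintro i ⟨u, hui, huy⟩ j ⟨v, hvj, hvy⟩
  by_contra hij
  rw [mem_ball] at hui huy hvj hvy
  have := dist_triangle4 (x i) u v (x j)
  have := dist_triangle u y v
  linarith [hx hij, dist_comm (x i) u, dist_comm y v]

theorem exists_clopen_locallyFinite_of_pairwise_le_dist {X ι : Type*} [PseudoMetricSpace X]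
    (hX : IsTopologicalBasis {s : Set X | IsClopen s}) {x : ι → X} {ε : ℝ} (hε : 0 < ε)
    (hx : Pairwise fun i j => ε ≤ dist (x i) (x j)) :
    ∃ A : ι → Set X, (∀ i, IsClopen (A i)) ∧ (∀ i, x i ∈ A i) ∧ LocallyFinite A ∧
      Pairwise (Disjoint on A) := by
  choose A hA hxA hAx using fun i =>
    hX.exists_subset_of_mem_open (mem_ball_self (by positivity : 0 < ε / 4))
      (isOpen_ball (x := x i))
  refine ⟨A, hA, hxA, (hx.locallyFinite_ball hε).subset hAx, fun i j hij => ?_⟩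
  exact (ball_disjoint_ball (by linarith [hx hij])).mono (hAx i) (hAx j)

section ClopenIndicatorSum
variable {X ι M : Type*} [TopologicalSpace X] [AddCommMonoid M] {A : ι → Set X}

theorem LocallyFinite.hasFiniteSupport_indicator (hA : LocallyFinite A) (f : ι → X → M)
    (x : X) :
    HasFiniteSupport fun i => (A i).indicator (f i) x :=
  (hA.point_finite x).subset fun _ => mem_of_indicator_ne_zero

variable [TopologicalSpace M] [ContinuousAdd M]

theorem continuous_finsum_indicator (hA : ∀ i, IsClopen (A i)) (hlf : LocallyFinite A) :
    Continuous fun p : (ι → M) × X => ∑ᶠ i, (A i).indicator (fun _ => p.1 i) p.2 := by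
  refine continuous_finsum (fun i => ?_)
    ((hlf.preimage_continuous continuous_snd).subset fun i _ => mem_of_indicator_ne_zero)
  exact ((hA i).preimage continuous_snd).continuous_indicator
    ((continuous_apply i).comp continuous_fst)

noncomputable def clopenIndicatorSum (hA : ∀ i, IsClopen (A i)) (hlf : LocallyFinite A) :
    (ι → M) →+ C(X, M) where
  toFun z := ⟨fun x => ∑ᶠ i, (A i).indicator (fun _ => z i) x,
    (continuous_finsum_indicator hA hlf).comp (Continuous.prodMk_right z)⟩
  map_zero' := by ext; simp
  map_add' z w := by
    ext x
    simpa only [ContinuousMap.coe_mk, ContinuousMap.add_apply, Pi.add_apply, indicator_add]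
      using finsum_add_distrib (hlf.hasFiniteSupport_indicator _ x)
        (hlf.hasFiniteSupport_indicator _ x)

variable (hA : ∀ i, IsClopen (A i)) (hlf : LocallyFinite A)

theorem clopenIndicatorSum_apply (z : ι → M) (x : X) :
    clopenIndicatorSum hA hlf z x = ∑ᶠ i, (A i).indicator (fun _ => z i) x :=
  rfl

theorem continuous_clopenIndicatorSum : Continuous (clopenIndicatorSum (M := M) hA hlf) :=
  ContinuousMap.continuous_of_continuous_uncurry _ (continuous_finsum_indicator hA hlf)

theorem clopenIndicatorSum_apply_of_mem (hd : Pairwise (Disjoint on A)) (z : ι → M)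
    {x : X} {j : ι} (hx : x ∈ A j) : clopenIndicatorSum hA hlf z x = z j := by
  rw [clopenIndicatorSum_apply, finsum_eq_single _ j fun i hij =>
    indicator_of_notMem ((hd hij).notMem_of_mem_right hx) _]
  exact indicator_of_mem hx _

theorem isEmbedding_clopenIndicatorSum (hd : Pairwise (Disjoint on A))
    (hne : ∀ i, (A i).Nonempty) :
    IsEmbedding (clopenIndicatorSum (M := M) hA hlf) := by
  choose x hx using hne
  refine LeftInverse.isEmbedding (f := fun g : C(X, M) => fun i => g (x i)) (fun z => ?_)
    (continuous_pi fun i => continuous_eval_const (x i)) (continuous_clopenIndicatorSum hA hlf)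
  exact funext fun i => clopenIndicatorSum_apply_of_mem hA hlf hd z (hx i)

end ClopenIndicatorSum

/-- If a zero-dimensional metric space `X` is not separable, then the compact
group `(ℤ/2)^{ω₁}` embeds as a topological subgroup into `C_k(X, 2)` (compact-open topology),
and consequently `C_k(X, 2)` does not have countable tightness. -/
theorem statement15 {X : Type*} [MetricSpace X]
    (hzd : TopologicalSpace.IsTopologicalBasis {s : Set X | IsClopen s})
    (hsep : ¬ TopologicalSpace.SeparableSpace X) :
    (∃ e : ((Cardinal.aleph 1).out → ZMod 2) →+ C(X, ZMod 2), Topology.IsEmbedding ⇑e) ∧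
      ¬ CountableTightness C(X, ZMod 2) := by
  have : Uncountable (Cardinal.aleph 1).out :=
    Cardinal.aleph0_lt_mk_iff.1 (by simp [Cardinal.mk_out])
  obtain ⟨ε, hε, S, hS, hSc⟩ := exists_isSeparated_not_countable hsep
  have : Uncountable S := not_countable_iff.1 (mt countable_coe_iff.1 hSc)
  obtain ⟨x⟩ : Nonempty ((Cardinal.aleph 1).out ↪ S) :=
    Cardinal.lift_mk_le'.1 (by simp [Cardinal.mk_out])
  have hx : Pairwise fun i j => (ε : ℝ) ≤ dist (x i : X) (x j) := fun i j hij =>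
    (hS.coe_lt_dist (x i).2 (x j).2 (Subtype.coe_injective.ne (x.injective.ne hij))).le
  obtain ⟨A, hA, hxA, hlf, hd⟩ :=
    exists_clopen_locallyFinite_of_pairwise_le_dist hzd (by positivity) hx
  have hemb := isEmbedding_clopenIndicatorSum (M := ZMod 2) hA hlf hd fun i => ⟨_, hxA i⟩
  exact ⟨⟨_, hemb⟩, fun h => not_countableTightness_pi (hemb.countableTightness h)⟩
end

section
/- Let κ : ℕ → Cardinal be a sequence of nonzero cardinals, and let G_κ = ⊕ₙ (ℤ/2)^{κₙ} with the box topology. Then G_κ is sequential if and only if κₙ ≤ ℵ₀ for every n. -/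
open Topology Set

/-!
If `κₙ` is uncountable, evaluation at `n` is a quotient map (it has the continuous section
`Pi.single n`) onto `(ℤ/2)^{κₙ}`, which is not sequential: the functions with countable support
form a sequentially closed set whose closure contains the constant function `1`.

Conversely, let every factor be compact Hausdorff and first countable. On the set
`tailEqSet p m` of functions agreeing with `p` from `m` on, a sequence converging in the product
also converges in the box topology, so a sequentially closed `A` meets that set in a closed subset
of the compact, first countable product. Given `p ∉ A`, closed neighbourhoods `Vₘ` of `pₘ` are
chosen one coordinate at a time, keeping `pi (Iio m) V ∩ tailEqSet p m` disjoint from `A`;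
compactness of the `A`-part of such a set makes the next choice possible, and the box
neighbourhood `∏ₘ interior Vₘ` then misses `A`.
-/

open Filter

section Box

variable {G : ℕ → Type*} [∀ n, TopologicalSpace (G n)]

theorem isOpen_boxTopology_pi {U : ∀ n, Set (G n)} (hU : ∀ n, IsOpen (U n)) :
    IsOpen[boxTopology G] (pi univ U) :=
  TopologicalSpace.isOpen_generateFrom_of_mem ⟨U, hU, rfl⟩

theorem boxTopology_le_pi : boxTopology G ≤ Pi.topologicalSpace := by
  refine le_iInf fun n => continuous_iff_le_induced.mp <| continuous_def.2 fun V hV => ?_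
  rw [← univ_pi_update_univ]
  refine isOpen_boxTopology_pi fun m => ?_
  rcases eq_or_ne m n with rfl | hm
  · simpa using hV
  · simp [hm]

def tailEqSet (p : Π n, G n) (m : ℕ) : Set (Π n, G n) :=
  {f | ∀ j, m ≤ j → f j = p j}

theorem isClosed_tailEqSet [∀ n, T1Space (G n)] (p : Π n, G n) (m : ℕ) :
    IsClosed (tailEqSet p m) := by
  simp only [tailEqSet, ofPred_forall]
  exact isClosed_iInter fun j => isClosed_iInter fun _ =>
    isClosed_singleton.preimage (continuous_apply j)

theorem tendsto_boxTopology_of_tendsto_pi {u : ℕ → Π n, G n} {x : Π n, G n} {M : ℕ}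
    (hu : ∀ k, u k ∈ tailEqSet x M) (h : Tendsto u atTop (𝓝 x)) :
    Tendsto u atTop (@nhds _ (boxTopology G) x) := by
  refine TopologicalSpace.tendsto_nhds_generateFrom_iff.2 ?_
  rintro _ ⟨U, hU, rfl⟩ hxU
  have hfin : pi (Iio M) U ∈ 𝓝 x :=
    set_pi_mem_nhds (finite_Iio M) fun j _ => (hU j).mem_nhds (hxU j trivial)
  filter_upwards [h hfin] with k hk j _
  rcases lt_or_ge j M with hj | hj
  · exact hk j hj
  · rw [hu k j hj]
    exact hxU j trivial

end Box

theorem not_sequentialSpace_pi_of_not_countable {ι X : Type*} [TopologicalSpace X] [T1Space X]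
    [Nontrivial X] (hι : ¬ Countable ι) : ¬ SequentialSpace (ι → X) := by
  intro _
  obtain ⟨x₀, y, hne⟩ := exists_pair_ne X
  set B : Set (ι → X) := {f | {i | f i ≠ x₀}.Countable}
  have hB : IsSeqClosed B := by
    intro u f hu hf
    refine (countable_iUnion hu).mono fun i hi => ?_
    obtain ⟨k, hk⟩ := ((tendsto_pi_nhds.1 hf i).eventually (isOpen_ne.mem_nhds hi)).exists
    exact mem_iUnion.2 ⟨k, hk⟩
  have hy : (fun _ => y) ∈ closure B := by
    classical
    refine mem_closure_of_tendsto (b := atTop)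
      (f := fun s : Finset ι => fun i => if i ∈ s then y else x₀) ?_ ?_
    · refine tendsto_pi_nhds.2 fun i => tendsto_const_nhds.congr' ?_
      filter_upwards [eventually_ge_atTop {i}] with s hs
      simp [Finset.singleton_subset_iff.1 hs]
    · exact Eventually.of_forall fun s => s.countable_toSet.mono fun i hi =>
        Finset.mem_coe.2 (by_contra fun hs => hi (by simp [hs]))
  rw [hB.isClosed.closure_eq] at hy
  exact hι (countable_univ_iff.1 (by simpa [hne.symm, B] using hy))

section BoxSum

variable {G : ℕ → Type*} [∀ n, AddGroup (G n)] [∀ n, TopologicalSpace (G n)]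

def singleDirectSum (n : ℕ) (x : G n) : directSum G :=
  ⟨Pi.single n x, eventually_atTop.2 ⟨n + 1, fun _ hm => Pi.single_eq_of_ne (by omega) x⟩⟩

theorem continuous_singleDirectSum (n : ℕ) :
    Continuous[_, boxSumTopology G] (singleDirectSum n) := by
  refine continuous_induced_rng.2 (continuous_generateFrom_iff.2 ?_)
  rintro _ ⟨U, hU, rfl⟩
  have hpre : (Subtype.val ∘ singleDirectSum n) ⁻¹' pi univ U =
      {x | (0 : Π m, G m) ∈ pi (univ \ {n}) U ∧ x ∈ U n} := by
    ext x
    exact update_mem_pi_iff.trans (by simp)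
  rw [hpre]
  by_cases h0 : (0 : Π m, G m) ∈ pi (univ \ {n}) U <;> simp [h0, hU n]

theorem continuous_boxSum_apply (n : ℕ) :
    Continuous[boxSumTopology G, _] fun f : directSum G => (f : Π m, G m) n :=
  @Continuous.comp _ _ _ (boxSumTopology G) (boxTopology G) _ _ _
    (continuous_le_dom boxTopology_le_pi (continuous_apply n)) continuous_induced_dom

theorem isQuotientMap_boxSum_apply (n : ℕ) :
    @IsQuotientMap _ _ (boxSumTopology G) _ fun f : directSum G => (f : Π m, G m) n :=
  @IsQuotientMap.of_inverse _ _ _ _ (boxSumTopology G) _ (continuous_singleDirectSum n)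
    (continuous_boxSum_apply n) fun x => Pi.single_eq_same n x

theorem sequentialSpace_of_sequentialSpace_boxSum
    [h : @SequentialSpace (directSum G) (boxSumTopology G)] (n : ℕ) : SequentialSpace (G n) :=
  @IsQuotientMap.sequentialSpace _ _ (boxSumTopology G) _ h _ (isQuotientMap_boxSum_apply n)

end BoxSum

section CompactFactors

variable {G : ℕ → Type*} [∀ n, TopologicalSpace (G n)] [∀ n, CompactSpace (G n)]
  [∀ n, T2Space (G n)] {A : Set (Π n, G n)} {p : Π n, G n}

theorem exists_closed_nhds_disjoint_tailEqSet_succ {S : Set (Π n, G n)} {m : ℕ}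
    (hA : IsClosed (A ∩ tailEqSet p (m + 1))) (hS : IsClosed S)
    (hdisj : Disjoint (S ∩ tailEqSet p m) A) :
    ∃ V ∈ 𝓝 (p m), IsClosed V ∧ Disjoint (S ∩ (fun f => f m) ⁻¹' V ∩ tailEqSet p (m + 1)) A := by
  set E := (fun f : Π n, G n => f m) '' (A ∩ tailEqSet p (m + 1) ∩ S)
  have hE : IsClosed E := ((hA.inter hS).isCompact.image (continuous_apply m)).isClosed
  have hpE : p m ∉ E := by
    rintro ⟨f, ⟨⟨hfA, hft⟩, hfS⟩, hfm⟩
    refine disjoint_left.1 hdisj ⟨hfS, fun j hj => ?_⟩ hfA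
    rcases hj.eq_or_lt with rfl | hj
    exacts [hfm, hft j hj]
  obtain ⟨V, hV, hVc, hVE⟩ := exists_mem_nhds_isClosed_subset (hE.isOpen_compl.mem_nhds hpE)
  refine ⟨V, hV, hVc, disjoint_left.2 ?_⟩
  rintro f ⟨⟨hfS, hfV⟩, hft⟩ hfA
  exact hVE hfV ⟨f, ⟨⟨hfA, hft⟩, hfS⟩, rfl⟩

theorem exists_nhds_forall_disjoint_pi_inter_tailEqSet
    (hA : ∀ m, IsClosed (A ∩ tailEqSet p m)) (hpA : p ∉ A) :
    ∃ V : ∀ n, Set (G n), (∀ n, V n ∈ 𝓝 (p n)) ∧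
      ∀ m, Disjoint (pi (Iio m) V ∩ tailEqSet p m) A := by
  have step : ∀ m (S : {S : Set (Π n, G n) // IsClosed S ∧ Disjoint (S ∩ tailEqSet p m) A}),
      ∃ V ∈ 𝓝 (p m), IsClosed (S.1 ∩ (fun f => f m) ⁻¹' V) ∧
        Disjoint (S.1 ∩ (fun f => f m) ⁻¹' V ∩ tailEqSet p (m + 1)) A := by
    rintro m ⟨S, hS, hdisj⟩
    obtain ⟨V, hV, hVc, hdisj'⟩ :=
      exists_closed_nhds_disjoint_tailEqSet_succ (hA (m + 1)) hS hdisj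
    exact ⟨V, hV, hS.inter (hVc.preimage (continuous_apply m)), hdisj'⟩
  choose V hV hS using step
  have hstart : Disjoint (univ ∩ tailEqSet p 0) A := disjoint_left.2 fun f hf hfA =>
    hpA (funext (fun j => hf.2 j j.zero_le) ▸ hfA)
  let S : (m : ℕ) → {S : Set (Π n, G n) // IsClosed S ∧ Disjoint (S ∩ tailEqSet p m) A} :=
    Nat.rec ⟨univ, isClosed_univ, hstart⟩ fun m S => ⟨_, hS m S⟩
  have hpi_subset : ∀ m, pi (Iio m) (fun n => V n (S n)) ⊆ (S m).1 := by
    intro m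
    induction m with
    | zero => exact subset_univ _
    | succ m ih => exact fun f hf =>
        ⟨ih fun j hj => hf j (Nat.lt_succ_of_lt hj), hf m (Nat.lt_succ_self m)⟩
  exact ⟨fun n => V n (S n), fun n => hV n (S n), fun m =>
    (S m).2.2.mono_left (inter_subset_inter_left _ (hpi_subset m))⟩

end CompactFactors

section SequentialBoxSum

variable {G : ℕ → Type*} [∀ n, AddGroup (G n)] [∀ n, TopologicalSpace (G n)]

theorem isClosed_image_val_inter_tailEqSet [∀ n, T1Space (G n)]
    [∀ n, FirstCountableTopology (G n)] {A : Set (directSum G)}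
    (hA : @IsSeqClosed _ (boxSumTopology G) A) (p : directSum G) (m : ℕ) :
    IsClosed (Subtype.val '' A ∩ tailEqSet (p : Π n, G n) m) := by
  refine IsSeqClosed.isClosed fun u x hu hux => ?_
  have hx : x ∈ tailEqSet (p : Π n, G n) m :=
    (isClosed_tailEqSet _ m).isSeqClosed (fun k => (hu k).2) hux
  have hxG : x ∈ directSum G := by
    filter_upwards [p.2, eventually_ge_atTop m] with j hj hjm
    rw [hx j hjm, hj]
  choose a haA hau using fun k => (hu k).1
  have hbox : Tendsto (fun k => (a k : Π n, G n)) atTop (@nhds _ (boxTopology G) x) := by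
    simp only [hau]
    exact tendsto_boxTopology_of_tendsto_pi (M := m)
      (fun k j hj => ((hu k).2 j hj).trans (hx j hj).symm) hux
  have ha : Tendsto a atTop (@nhds _ (boxSumTopology G) ⟨x, hxG⟩) := by
    rw [boxSumTopology, @nhds_induced _ _ (boxTopology G), tendsto_comap_iff]
    exact hbox
  exact ⟨⟨_, hA haA ha, rfl⟩, hx⟩

theorem sequentialSpace_boxSum [∀ n, CompactSpace (G n)] [∀ n, T2Space (G n)]
    [∀ n, FirstCountableTopology (G n)] : @SequentialSpace (directSum G) (boxSumTopology G) := by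
  refine @SequentialSpace.mk _ (boxSumTopology G) fun A hA => ?_
  rw [← @isOpen_compl_iff _ _ (boxSumTopology G), @isOpen_iff_mem_nhds _ (boxSumTopology G)]
  intro p hpA
  obtain ⟨V, hV, hdisj⟩ := exists_nhds_forall_disjoint_pi_inter_tailEqSet
    (isClosed_image_val_inter_tailEqSet hA p) (Subtype.val_injective.mem_set_image.not.2 hpA)
  rw [boxSumTopology, @nhds_induced _ _ (boxTopology G)]
  refine mem_comap.2 ⟨pi univ fun n => interior (V n), ?_, fun f hf hfA => ?_⟩
  · exact @IsOpen.mem_nhds _ (boxTopology G) _ _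
      (isOpen_boxTopology_pi fun n => isOpen_interior)
      fun n _ => mem_interior_iff_mem_nhds.2 (hV n)
  · obtain ⟨M, hM⟩ := eventually_atTop.1 (f.2.and p.2)
    refine disjoint_left.1 (hdisj M) ⟨fun j _ => interior_subset (hf j trivial), fun j hj => ?_⟩
      ⟨f, hfA, rfl⟩
    rw [(hM j hj).1, (hM j hj).2]

end SequentialBoxSum

theorem statement18_general (κ : ℕ → Cardinal) :
    @SequentialSpace ↥(directSum (fun n => (κ n).out → ZMod 2))
      (boxSumTopology (fun n => (κ n).out → ZMod 2)) ↔
    ∀ n, κ n ≤ Cardinal.aleph0 := by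
  have hcount : ∀ n, κ n ≤ Cardinal.aleph0 ↔ Countable (κ n).out := fun n => by
    rw [← Cardinal.mk_le_aleph0_iff, Cardinal.mk_out]
  simp only [hcount]
  constructor
  · intro _ n
    by_contra hn
    exact not_sequentialSpace_pi_of_not_countable (X := ZMod 2) hn
      (sequentialSpace_of_sequentialSpace_boxSum (G := fun n => (κ n).out → ZMod 2) n)
  · intro _
    exact sequentialSpace_boxSum

/-- For a sequence `κ` of nonzero cardinals, the group
`G_κ = ⊕ₙ (ℤ/2)^{κₙ}` with the box topology is sequential if and only if `κₙ ≤ ℵ₀`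
for every `n`. -/
theorem statement18 (κ : ℕ → Cardinal) (hκ : ∀ n, κ n ≠ 0) :
    @SequentialSpace ↥(directSum (fun n => (κ n).out → ZMod 2))
      (boxSumTopology (fun n => (κ n).out → ZMod 2)) ↔
    ∀ n, κ n ≤ Cardinal.aleph0 :=
  statement18_general κ
end

section
/- Let X be a zero-dimensional metric space which is not locally compact and whose derived set X' is not compact. Then X contains a closed subspace homeomorphic to L = M ⊔ (ℕ × s), the topological sum of the countably infinite metric fan M = (ω × ℕ) ∪ {∞} and countably many copies of the convergent sequence s = {0} ∪ {1/n : n ∈ ℕ}. -/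
open Topology Set

/-! A point `x₀` at which `X` is not locally compact has no compact neighbourhood, so every closed
ball around it contains an infinite closed discrete set; choosing such sets in disjoint annuli
shrinking to `x₀` gives the columns of a closed copy of the fan `M`. The derived set is closed and
not compact, so it contains an infinite closed discrete set of non-isolated points `z p ≠ x₀`.
Sequences converging to the `z p` inside pairwise disjoint balls whose radii tend to `0` form a
closed copy of `ℕ × s` missing `x₀`, and the fan is built inside its complement. -/

open Filter Function Metric

section Topological

variable {X : Type*} [TopologicalSpace X]

theorem IsClosed.exists_infinite_subset_compl_mem_codiscrete [T1Space X]
    [TopologicalSpace.PseudoMetrizableSpace X] {C : Set X} (hC : IsClosed C)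
    (hC' : ¬IsCompact C) : ∃ S ⊆ C, S.Infinite ∧ Sᶜ ∈ codiscrete X := by
  have hcc : ¬IsCountablyCompact C := fun h => hC' h.isSeqCompact.isCompact
  rw [isCountablyCompact_iff_infinite_subset_has_accPt] at hcc
  push Not at hcc
  obtain ⟨S, hSC, hS, hacc⟩ := hcc
  refine ⟨S, hSC, hS, mem_codiscrete_accPt.2 fun x hx => ?_⟩
  rw [compl_compl] at hx
  exact hacc x (isClosed_iff_accPt.1 hC x (hx.mono (principal_mono.2 hSC))) hx

theorem isClosedEmbedding_prod_of_locallyFinite {ι Y : Type*} [TopologicalSpace ι]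
    [DiscreteTopology ι] [TopologicalSpace Y] {e : ι → Y → X}
    (he : ∀ i, IsClosedEmbedding (e i)) (hdisj : Pairwise (Disjoint on fun i => range (e i)))
    (hlf : LocallyFinite fun i => range (e i)) :
    IsClosedEmbedding fun w : ι × Y => e w.1 w.2 := by
  refine .of_continuous_injective_isClosedMap
    (continuous_prod_of_discrete_left.2 fun i => (he i).continuous) ?_ fun F hF => ?_
  · rintro ⟨i, y⟩ ⟨j, y'⟩ h
    obtain rfl : i = j := by_contra fun hij => (hdisj hij).ne_of_mem ⟨y, rfl⟩ ⟨y', rfl⟩ h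
    exact congrArg (Prod.mk i) ((he i).injective h)
  · have himage : (fun w : ι × Y => e w.1 w.2) '' F = ⋃ i, e i '' (Prod.mk i ⁻¹' F) := by
      ext; simp
    rw [himage]
    exact (hlf.subset fun i => image_subset_range _ _).isClosed_iUnion
      fun i => (he i).isClosedMap _ (hF.preimage (Continuous.prodMk_right i))

theorem exists_injective_tendsto_of_nhdsNE_neBot [T1Space X] [FirstCountableTopology X] {z : X}
    (hz : (𝓝[≠] z).NeBot) {s : Set X} (hs : s ∈ 𝓝 z) :
    ∃ u : ℕ → X, Injective u ∧ (∀ n, u n ∈ s \ {z}) ∧ Tendsto u atTop (𝓝 z) := by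
  obtain ⟨v, hv⟩ := exists_seq_tendsto (𝓝[≠] z)
  have hfin : ∀ t ∈ 𝓝[≠] z, (range v \ t).Finite := fun t ht =>
    ((Nat.cofinite_eq_atTop ▸ hv ht : v ⁻¹' t ∈ cofinite).image v).subset
      (by rintro _ ⟨⟨n, rfl⟩, hn⟩; exact mem_image_of_mem v hn)
  have hinf : (range v).Infinite := fun h => by
    obtain ⟨n, hn⟩ := (hv.eventually_mem (nhdsNE_le_cofinite z h.compl_mem_cofinite)).exists
    exact hn ⟨n, rfl⟩
  have hS : (range v ∩ (s \ {z})).Infinite := by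
    simpa only [sdiff_sdiff_right_self] using
      hinf.sdiff (hfin _ (sdiff_mem_nhdsWithin_compl hs {z}))
  let u : ℕ → X := fun n => (hS.natEmbedding _ n).1
  have hu : Injective u := Subtype.val_injective.comp (hS.natEmbedding _).injective
  refine ⟨u, hu, fun n => (hS.natEmbedding _ n).2.2, ?_⟩
  rw [← Nat.cofinite_eq_atTop]
  exact fun U hU => mem_cofinite.2 (((hfin U (mem_nhdsWithin_of_mem_nhds hU)).preimage
    hu.injOn).subset fun n hn => ⟨(hS.natEmbedding _ n).2.1, hn⟩)

theorem isClosedEmbedding_onePoint_elim [T2Space X] {z : X} {u : ℕ → X} (hu : Injective u)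
    (hz : ∀ n, u n ≠ z) (hlim : Tendsto u atTop (𝓝 z)) :
    IsClosedEmbedding fun w : OnePoint ℕ => w.elim z u := by
  refine Continuous.isClosedEmbedding ?_ ?_
  · rw [OnePoint.continuous_iff_from_discrete, Nat.cofinite_eq_atTop]
    exact hlim
  · rintro (_ | m) (_ | n) h
    · rfl
    · exact absurd h.symm (hz n)
    · exact absurd h (hz m)
    · exact congrArg _ (hu h)

noncomputable def onePointNatHomeomorphSSet : OnePoint ℕ ≃ₜ sSet :=
  let f : OnePoint ℕ → sSet := fun w => w.elim ⟨0, Or.inl rfl⟩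
    fun n => ⟨1 / ((n + 1 : ℕ) : ℝ), one_div_mem_sSet _⟩
  have hf : Bijective f := by
    refine ⟨?_, ?_⟩
    · intro a b h
      induction a using OnePoint.rec <;> induction b using OnePoint.rec <;>
        simp [f, Subtype.ext_iff] at h ⊢
      all_goals first | exact h | linarith
    · rintro ⟨x, rfl | ⟨n, hn, rfl⟩⟩
      · exact ⟨OnePoint.infty, rfl⟩
      · refine ⟨((n - 1 : ℕ) : OnePoint ℕ), ?_⟩
        exact Subtype.ext (by simp [f, Nat.cast_sub hn])
  have hcont : Continuous (Equiv.ofBijective f hf) := by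
    rw [OnePoint.continuous_iff_from_discrete, tendsto_subtype_rng, Nat.cofinite_eq_atTop]
    simpa [f] using tendsto_one_div_add_atTop_nhds_zero_nat (𝕜 := ℝ)
  hcont.homeoOfEquivCompactToT2

theorem isClosed_image_of_subset_snd_lt {g : ℕ × ℕ → X}
    (hcol : ∀ n, (range fun α => g (α, n))ᶜ ∈ codiscrete X) {N : ℕ} {A : Set (ℕ × ℕ)}
    (hA : A ⊆ {p | p.2 < N}) : IsClosed (g '' A) := by
  have hcols : (g '' {p | p.2 < N})ᶜ ∈ codiscrete X := by
    have : g '' {p | p.2 < N} = ⋃ n ∈ Iio N, range fun α => g (α, n) := by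
      ext
      simp only [mem_image, mem_ofPred_eq, mem_iUnion, mem_range, mem_Iio, Prod.exists]
      exact ⟨fun ⟨a, b, hb, h⟩ => ⟨b, hb, a, h⟩, fun ⟨b, hb, a, h⟩ => ⟨a, b, hb, h⟩⟩
    rw [this, compl_iUnion₂]
    exact (biInter_mem (Set.toFinite _)).2 fun n _ => hcol n
  exact (compl_mem_codiscrete_iff.1 (mem_of_superset hcols
    (compl_subset_compl.2 (image_mono hA)))).1

theorem isClosed_insert_image_of_tendsto [T2Space X] {x₀ : X} {g : ℕ × ℕ → X}
    (hlim : Tendsto g (comap Prod.snd atTop) (𝓝 x₀))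
    (hcol : ∀ n, (range fun α => g (α, n))ᶜ ∈ codiscrete X) (A : Set (ℕ × ℕ)) :
    IsClosed (insert x₀ (g '' A)) := by
  refine isOpen_compl_iff.1 (isOpen_iff_mem_nhds.2 fun y hy => ?_)
  obtain ⟨V, W, hV, hW, hyV, hxW, hVW⟩ :=
    t2_separation fun h : y = x₀ => hy (h ▸ mem_insert _ _)
  obtain ⟨N, -, hN⟩ := (atTop_basis.comap Prod.snd).tendsto_left_iff.1 hlim W (hW.mem_nhds hxW)
  have hK := isClosed_image_of_subset_snd_lt hcol (A := A ∩ {p | p.2 < N}) inter_subset_right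
  refine mem_of_superset
    (inter_mem (hV.mem_nhds hyV) (hK.isOpen_compl.mem_nhds fun h => ?_)) ?_
  · exact hy (mem_insert_of_mem _ (image_mono inter_subset_left h))
  rintro w ⟨hwV, hwK⟩ (rfl | ⟨p, hpA, rfl⟩)
  · exact hVW.ne_of_mem hwV hxW rfl
  · rcases lt_or_ge p.2 N with h | h
    · exact hwK ⟨p, ⟨hpA, h⟩, rfl⟩
    · exact hVW.ne_of_mem hwV (hN h) rfl

theorem isClosedEmbedding_fan [T2Space X] {x₀ : X} {g : ℕ × ℕ → X} (hg : Injective g)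
    (hne : ∀ p, g p ≠ x₀) (hlim : Tendsto g (comap Prod.snd atTop) (𝓝 x₀))
    (hcol : ∀ n, (range fun α => g (α, n))ᶜ ∈ codiscrete X) :
    IsClosedEmbedding fun w : FanM => Option.elim w x₀ g := by
  refine .of_continuous_injective_isClosedMap ?_ ?_ fun F hF => ?_
  · refine continuous_def.2 fun V hV hx₀V => ?_
    obtain ⟨N, -, hN⟩ :=
      (atTop_basis.comap Prod.snd).tendsto_left_iff.1 hlim V (hV.mem_nhds hx₀V)
    exact ⟨N, fun α n hn => hN (show (α, n) ∈ Prod.snd ⁻¹' Ici N from hn)⟩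
  · rintro (_ | p) (_ | q) h
    · rfl
    · exact absurd h.symm (hne q)
    · exact absurd h (hne p)
    · exact congrArg some (hg h)
  · -- A closed set of the fan either contains `∞` or misses a whole tail `{(α, n) | N ≤ n}`.
    set A : Set (ℕ × ℕ) := {p | some p ∈ F}
    by_cases hnone : none ∈ F
    · convert isClosed_insert_image_of_tendsto hlim hcol A using 1
      ext y
      constructor
      · rintro ⟨_ | p, hw, rfl⟩
        · exact mem_insert _ _
        · exact mem_insert_of_mem _ ⟨p, hw, rfl⟩
      · rintro (rfl | ⟨p, hp, rfl⟩)
        · exact ⟨none, hnone, rfl⟩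
        · exact ⟨some p, hp, rfl⟩
    · obtain ⟨N, hN⟩ := hF.isOpen_compl hnone
      convert isClosed_image_of_subset_snd_lt hcol (N := N) (A := A)
        fun p hp => not_le.1 fun h => hN p.1 p.2 h hp using 1
      ext y
      constructor
      · rintro ⟨_ | p, hw, rfl⟩
        · exact absurd hw hnone
        · exact ⟨p, hw, rfl⟩
      · rintro ⟨p, hp, rfl⟩
        exact ⟨some p, hp, rfl⟩

end Topological

theorem exists_pos_forall_dist_lt_eq_of_compl_mem_codiscrete {X : Type*} [PseudoMetricSpace X]
    {Z : Set X} (hZ : Zᶜ ∈ codiscrete X) (x : X) : ∃ r > 0, ∀ y ∈ Z, dist y x < r → y = x := by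
  have := disjoint_principal_right.1 (mem_codiscrete.1 hZ x)
  rw [compl_compl] at this
  obtain ⟨r, hr, hsub⟩ := Metric.mem_nhdsWithin_iff.1 this
  exact ⟨r, hr, fun y hy hyx => by_contra fun hne => hsub ⟨hyx, hne⟩ hy⟩

section Metric

variable {X : Type*} [MetricSpace X]

theorem exists_annulus_infinite_compl_mem_codiscrete {x₀ : X}
    (hx₀ : ∀ K ∈ 𝓝 x₀, ¬IsCompact K) {ρ : ℝ} (hρ : 0 < ρ) :
    ∃ ρ', (0 < ρ' ∧ ρ' ≤ ρ / 2) ∧ ∃ S ⊆ closedBall x₀ ρ \ closedBall x₀ ρ',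
      S.Infinite ∧ Sᶜ ∈ codiscrete X := by
  obtain ⟨S, hSB, hS, hSd⟩ := isClosed_closedBall.exists_infinite_subset_compl_mem_codiscrete
    (hx₀ _ (closedBall_mem_nhds x₀ hρ))
  have hSd' : (S \ {x₀})ᶜ ∈ codiscrete X :=
    mem_of_superset hSd (compl_subset_compl.2 sdiff_subset)
  obtain ⟨ε, hε, hball⟩ := Metric.mem_nhds_iff.1
    ((compl_mem_codiscrete_iff.1 hSd').1.isOpen_compl.mem_nhds fun h => h.2 rfl)
  refine ⟨min (ε / 2) (ρ / 2), ⟨by positivity, min_le_right _ _⟩, S \ {x₀},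
    fun x hx => ⟨hSB hx.1, fun hx' => hball ?_ hx⟩, hS.sdiff (finite_singleton x₀), hSd'⟩
  exact mem_ball.2
    ((mem_closedBall.1 hx').trans_lt ((min_le_left _ _).trans_lt (half_lt_self hε)))

theorem exists_annuli_infinite_compl_mem_codiscrete {x₀ : X}
    (hx₀ : ∀ K ∈ 𝓝 x₀, ¬IsCompact K) {ρ₀ : ℝ} (hρ₀ : 0 < ρ₀) :
    ∃ ρ : ℕ → ℝ, ∃ S : ℕ → Set X, Antitone ρ ∧ ρ 0 = ρ₀ ∧ (∀ n, 0 < ρ n) ∧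
      Tendsto ρ atTop (𝓝 0) ∧ ∀ n, (∀ x ∈ S n, dist x x₀ ∈ Ioc (ρ (n + 1)) (ρ n)) ∧
        (S n).Infinite ∧ (S n)ᶜ ∈ codiscrete X := by
  choose! next hnext S hS hSinf hSd using
    fun ρ (hρ : 0 < ρ) => exists_annulus_infinite_compl_mem_codiscrete hx₀ hρ
  set ρ : ℕ → ℝ := fun n => next^[n] ρ₀
  have hρ_succ : ∀ n, ρ (n + 1) = next (ρ n) := fun n => iterate_succ_apply' next n ρ₀
  have hρ : ∀ n, 0 < ρ n ∧ ρ n ≤ ρ₀ * (1 / 2) ^ n := by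
    intro n
    induction n with
    | zero => simp [ρ, hρ₀]
    | succ n ih =>
      rw [hρ_succ, pow_succ]
      obtain ⟨h₁, h₂⟩ := hnext _ ih.1
      exact ⟨h₁, by linarith [ih.2]⟩
  have hgeom : Tendsto (fun n => ρ₀ * (1 / 2 : ℝ) ^ n) atTop (𝓝 0) := by
    simpa using (tendsto_pow_atTop_nhds_zero_of_lt_one (r := (1 / 2 : ℝ)) (by norm_num)
      (by norm_num)).const_mul ρ₀
  refine ⟨ρ, fun n => S (ρ n), antitone_nat_of_succ_le fun n => ?_, rfl, fun n => (hρ n).1,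
    squeeze_zero (fun n => (hρ n).1.le) (fun n => (hρ n).2) hgeom,
    fun n => ⟨fun x hx => ?_, hSinf _ (hρ n).1, hSd _ (hρ n).1⟩⟩
  · rw [hρ_succ]
    linarith [(hnext _ (hρ n).1).2, (hρ n).1]
  · obtain ⟨h₁, h₂⟩ := hS _ (hρ n).1 hx
    rw [hρ_succ]
    exact ⟨lt_of_not_ge fun h => h₂ (mem_closedBall.2 h), mem_closedBall.1 h₁⟩

theorem exists_isClosedEmbedding_fan {x₀ : X} (hx₀ : ∀ K ∈ 𝓝 x₀, ¬IsCompact K) {W : Set X}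
    (hW : W ∈ 𝓝 x₀) : ∃ e : FanM → X, IsClosedEmbedding e ∧ range e ⊆ W := by
  obtain ⟨ρ₀, hρ₀, hρ₀W⟩ := nhds_basis_closedBall.mem_iff.1 hW
  obtain ⟨ρ, S, hanti, rfl, hρ, hρlim, hS⟩ := exists_annuli_infinite_compl_mem_codiscrete hx₀ hρ₀
  let g : ℕ × ℕ → X := fun p => ((hS p.2).2.1.natEmbedding _ p.1).1
  have hgS : ∀ α n, g (α, n) ∈ S n := fun α n => ((hS n).2.1.natEmbedding _ α).2
  have hdist : ∀ p, dist (g p) x₀ ∈ Ioc (ρ (p.2 + 1)) (ρ p.2) :=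
    fun ⟨α, n⟩ => (hS n).1 _ (hgS α n)
  have hg : Injective g := by
    rintro ⟨α, n⟩ ⟨β, m⟩ h
    obtain rfl : n = m := by_contra fun hnm =>
      (hanti.pairwise_disjoint_on_Ioc_succ hnm).ne_of_mem (hdist (α, n)) (hdist (β, m))
        (congrArg (dist · x₀) h)
    exact congrArg (·, n) ((Set.Infinite.natEmbedding _ _).injective (Subtype.ext h))
  have hlim : Tendsto g (comap Prod.snd atTop) (𝓝 x₀) :=
    tendsto_iff_dist_tendsto_zero.2 (squeeze_zero (fun _ => dist_nonneg)
      (fun p => (hdist p).2) (hρlim.comp tendsto_comap))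
  refine ⟨_, isClosedEmbedding_fan hg (fun p h => (hdist p).1.not_ge (by simp [h, (hρ _).le]))
    hlim fun n => mem_of_superset (hS n).2.2
      (compl_subset_compl.2 (range_subset_iff.2 fun α => hgS α n)), ?_⟩
  rintro _ ⟨_ | p, rfl⟩
  · exact hρ₀W (mem_closedBall_self hρ₀.le)
  · exact hρ₀W (mem_closedBall.2 ((hdist p).2.trans (hanti (Nat.zero_le _))))

theorem locallyFinite_closedBall_of_tendsto {z : ℕ → X} (hz : Injective z)
    (hZ : (range z)ᶜ ∈ codiscrete X) {δ : ℕ → ℝ} (hδ : Tendsto δ atTop (𝓝 0)) :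
    LocallyFinite fun p => closedBall (z p) (δ p) := by
  intro y
  obtain ⟨r, hr, hiso⟩ := exists_pos_forall_dist_lt_eq_of_compl_mem_codiscrete hZ y
  have hsmall : {p | r / 2 ≤ δ p}.Finite := by
    simpa [← Nat.cofinite_eq_atTop] using hδ.eventually (gt_mem_nhds (half_pos hr))
  refine ⟨ball y (r / 2), ball_mem_nhds y (half_pos hr),
    (hsmall.union ((finite_singleton y).preimage hz.injOn)).subset ?_⟩
  rintro p ⟨w, hwz, hwy⟩
  refine or_iff_not_imp_left.2 fun hp => hiso _ ⟨p, rfl⟩ ?_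
  have := dist_triangle (z p) w y
  rw [mem_closedBall, dist_comm] at hwz
  rw [mem_ball] at hwy
  simp only [mem_ofPred_eq, not_le] at hp
  linarith

theorem exists_pairwise_disjoint_closedBall_of_compl_mem_codiscrete {Z : Set X}
    (hZ : Zᶜ ∈ codiscrete X) {z : ℕ → X} (hz : Injective z) (hzZ : ∀ p, z p ∈ Z) :
    ∃ δ : ℕ → ℝ, (∀ p, 0 < δ p) ∧ Tendsto δ atTop (𝓝 0) ∧
      Pairwise (Disjoint on fun p => closedBall (z p) (δ p)) ∧
        ∀ p, ∀ x ∈ Z, x ∈ closedBall (z p) (δ p) → x = z p := by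
  choose r hr hiso using fun p => exists_pos_forall_dist_lt_eq_of_compl_mem_codiscrete hZ (z p)
  have hsep : ∀ p q, p ≠ q → r p ≤ dist (z q) (z p) := fun p q hpq =>
    not_lt.1 fun h => hpq (hz (hiso p _ (hzZ q) h)).symm
  -- `r p / 3` makes the balls pairwise disjoint and isolates `z p` in `Z`; `1 / (p + 1)` makes
  -- them shrink.
  set δ : ℕ → ℝ := fun p => min (r p / 3) (1 / (p + 1))
  have hδr : ∀ p, δ p ≤ r p / 3 := fun p => min_le_left _ _
  have hδ : ∀ p, 0 < δ p := fun p => lt_min (by linarith [hr p]) Nat.one_div_pos_of_nat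
  refine ⟨δ, hδ, squeeze_zero (fun p => (hδ p).le) (fun p => min_le_right _ _)
      tendsto_one_div_add_atTop_nhds_zero_nat, fun p q hpq => ?_,
    fun p x hx h => hiso p x hx ((mem_closedBall.1 h).trans_lt
      ((hδr p).trans_lt (by linarith [hr p])))⟩
  refine closedBall_disjoint_closedBall ?_
  have := hδr p
  have := hδr q
  rcases le_total (r p) (r q) with h | h
  · linarith [hsep q p hpq.symm, hr p]
  · linarith [hsep p q hpq, dist_comm (z p) (z q), hr q]

theorem exists_isClosedEmbedding_prod_onePoint {z : ℕ → X} (hz : Injective z)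
    (hZ : (range z)ᶜ ∈ codiscrete X) (hacc : ∀ p, (𝓝[≠] z p).NeBot) {x₀ : X}
    (hx₀ : x₀ ∉ range z) : ∃ e : ℕ × OnePoint ℕ → X, IsClosedEmbedding e ∧ x₀ ∉ range e := by
  have hZ₀ : (insert x₀ (range z))ᶜ ∈ codiscrete X := by
    rw [insert_eq, compl_union]
    exact inter_mem (finite_singleton x₀).compl_mem_codiscrete hZ
  obtain ⟨δ, hδ, hδ0, hdisj, hδZ⟩ := exists_pairwise_disjoint_closedBall_of_compl_mem_codiscrete
    hZ₀ hz fun p => mem_insert_of_mem _ ⟨p, rfl⟩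
  choose u hu hus hlim using fun p =>
    exists_injective_tendsto_of_nhdsNE_neBot (hacc p) (closedBall_mem_nhds (z p) (hδ p))
  have hrange :
      ∀ p, range (fun w : OnePoint ℕ => w.elim (z p) (u p)) ⊆ closedBall (z p) (δ p) := by
    rintro p _ ⟨_ | n, rfl⟩
    · exact mem_closedBall_self (hδ p).le
    · exact (hus p n).1
  refine ⟨fun w => w.2.elim (z w.1) (u w.1),
    isClosedEmbedding_prod_of_locallyFinite
      (fun p => isClosedEmbedding_onePoint_elim (hu p) (fun n => (hus p n).2) (hlim p))
      (fun p q hpq => (hdisj hpq).mono (hrange p) (hrange q))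
      ((locallyFinite_closedBall_of_tendsto hz hZ hδ0).subset hrange), ?_⟩
  rintro ⟨⟨p, w⟩, h⟩
  exact hx₀ ⟨p, (hδZ p x₀ (mem_insert _ _) (hrange p ⟨w, h⟩)).symm⟩

theorem exists_isClosedEmbedding_prod_sSet (hd : ¬IsCompact {x : X | (𝓝[≠] x).NeBot})
    (x₀ : X) : ∃ e : ℕ × sSet → X, IsClosedEmbedding e ∧ x₀ ∉ range e := by
  have hD : IsClosed {x : X | (𝓝[≠] x).NeBot} := by
    simpa [derivedSet, AccPt] using isClosed_derivedSet (univ : Set X)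
  obtain ⟨S, hSD, hS, hSd⟩ := hD.exists_infinite_subset_compl_mem_codiscrete hd
  have hS' : (S \ {x₀}).Infinite := hS.sdiff (finite_singleton x₀)
  let z : ℕ → X := fun p => (hS'.natEmbedding _ p).1
  have hzS : ∀ p, z p ∈ S \ {x₀} := fun p => (hS'.natEmbedding _ p).2
  obtain ⟨e, he, hx₀e⟩ := exists_isClosedEmbedding_prod_onePoint
    (Subtype.val_injective.comp (hS'.natEmbedding _).injective)
    (mem_of_superset hSd (compl_subset_compl.2 (range_subset_iff.2 fun p => (hzS p).1)))
    (fun p => hSD (hzS p).1) (x₀ := x₀) fun ⟨p, hp⟩ => (hzS p).2 hp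
  refine ⟨e ∘ Homeomorph.prodCongr (Homeomorph.refl ℕ) onePointNatHomeomorphSSet.symm,
    he.comp (Homeomorph.isClosedEmbedding _), ?_⟩
  rintro ⟨w, hw⟩
  exact hx₀e ⟨_, hw⟩

end Metric

theorem statement19_general {X : Type*} [MetricSpace X]
    (hnlc : ¬ LocallyCompactSpace X)
    (hd : ¬ IsCompact {x : X | (𝓝[≠] x).NeBot}) :
    ∃ e : Lspace → X, Topology.IsClosedEmbedding e := by
  obtain ⟨x₀, hx₀⟩ : ∃ x₀ : X, ∀ K ∈ 𝓝 x₀, ¬IsCompact K := by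
    by_contra! h
    have : WeaklyLocallyCompactSpace X :=
      ⟨fun x => let ⟨K, hK, hKc⟩ := h x; ⟨K, hKc, hK⟩⟩
    exact hnlc WeaklyLocallyCompactSpace.locallyCompactSpace
  obtain ⟨e₂, he₂, hx₀e₂⟩ := exists_isClosedEmbedding_prod_sSet hd x₀
  obtain ⟨e₁, he₁, he₁e₂⟩ :=
    exists_isClosedEmbedding_fan hx₀ (he₂.isClosed_range.isOpen_compl.mem_nhds hx₀e₂)
  exact ⟨Sum.elim e₁ e₂, he₁.sumElim he₂
    (he₁.injective.sumElim he₂.injective fun a b h => he₁e₂ ⟨a, rfl⟩ ⟨b, h.symm⟩)⟩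

/-- A zero-dimensional metric space `X` that is not locally compact and whose
derived set (the set of non-isolated points) is not compact contains a closed subspace
homeomorphic to `L = M ⊔ (ℕ × s)`, the sum of the metric fan and countably many convergent
sequences. -/
theorem statement19 {X : Type*} [MetricSpace X]
    (hzd : TopologicalSpace.IsTopologicalBasis {s : Set X | IsClopen s})
    (hnlc : ¬ LocallyCompactSpace X)
    (hd : ¬ IsCompact {x : X | (𝓝[≠] x).NeBot}) :
    ∃ e : Lspace → X, Topology.IsClosedEmbedding e :=
  statement19_general hnlc hd
end
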